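/- arXiv:math/9712284 — 6 statements merged into one kernel-verified Lean document; each statement's English description precedes it below -/
import Mathlib

section
/- Let (W, w) be a λ-candidate and let B with elements x_i (i < λ) realize BA(W, w). Then B satisfies the c.c.c.: every set of pairwise disjoint nonzero elements of B is countable; moreover, if λ is infinite then B has cardinality at most λ. -/
open Set

lemma uncount_mono {α : Type*} {s t : Set α} (h : s ⊆ t) (hs : ¬s.Countable) : ¬t.Countable :=
  fun ht => hs (ht.mono h)

lemma delta_aux {ι : Type*} [DecidableEq ι] : ∀ (n : ℕ) (𝒜 : Set (Finset ι)),
    (∀ a ∈ 𝒜, a.card ≤ n) → ¬𝒜.Countable →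
    ∃ r : Finset ι, ∃ 𝒜' ⊆ 𝒜, ¬𝒜'.Countable ∧
      ∀ a ∈ 𝒜', ∀ b ∈ 𝒜', a ≠ b → a ∩ b = r := by
  intro n
  induction n with
  | zero =>
    intro 𝒜 hcard hunc
    exact absurd ((Set.countable_singleton (∅ : Finset ι)).mono
      (fun a ha => by simpa using Finset.card_eq_zero.1 (Nat.le_zero.1 (hcard a ha)))) hunc
  | succ n ih =>
    intro 𝒜 hcard hunc
    by_cases hex : ∃ i : ι, ¬{a ∈ 𝒜 | i ∈ a}.Countable
    · obtain ⟨i, hi⟩ := hex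
      set 𝒜i := {a ∈ 𝒜 | i ∈ a} with h𝒜i
      have hinj : Set.InjOn (fun a => Finset.erase a i) 𝒜i := by
        intro a ha b hb hab
        have : insert i (a.erase i) = insert i (b.erase i) := by
          simp only at hab; rw [hab]
        rwa [Finset.insert_erase ha.2, Finset.insert_erase hb.2] at this
      set ℬ := (fun a => Finset.erase a i) '' 𝒜i with hℬ
      have hBcard : ∀ b ∈ ℬ, b.card ≤ n := by
        rintro b ⟨a, ha, rfl⟩
        have h1 := Finset.card_erase_of_mem ha.2
        have h2 := hcard a ha.1
        simp only at h1 ⊢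
        omega
      have hBunc : ¬ℬ.Countable := by
        intro hcnt
        exact hi ((Set.mapsTo_image _ _).countable_of_injOn hinj hcnt)
      obtain ⟨r, ℬ', hB'sub, hB'unc, hroot⟩ := ih ℬ hBcard hBunc
      refine ⟨insert i r, {a ∈ 𝒜i | a.erase i ∈ ℬ'}, fun a ha => ha.1.1, ?_, ?_⟩
      · intro hcnt
        apply hB'unc
        have hsub : ℬ' ⊆ (fun a => Finset.erase a i) '' {a ∈ 𝒜i | a.erase i ∈ ℬ'} := by
          intro b hb
          obtain ⟨a, ha, rfl⟩ := hB'sub hb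
          exact ⟨a, ⟨ha, hb⟩, rfl⟩
        exact (hcnt.image _).mono hsub
      · intro a ha b hb hab
        have h1 : a.erase i ≠ b.erase i := fun h => hab (hinj ha.1 hb.1 h)
        have h2 := hroot _ ha.2 _ hb.2 h1
        ext j
        by_cases hj : j = i
        · subst hj; simp [ha.1.2, hb.1.2]
        · have : (j ∈ a.erase i ∧ j ∈ b.erase i) ↔ j ∈ r := by
            rw [← Finset.mem_inter, h2]
          simp only [Finset.mem_erase, hj, ne_eq, not_false_iff, true_and] at this
          simp [Finset.mem_inter, Finset.mem_insert, hj, this]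
    · push_neg at hex
      -- Zorn's lemma: maximal pairwise disjoint subfamily
      set S := {M : Set (Finset ι) | M ⊆ 𝒜 ∧ ∀ a ∈ M, ∀ b ∈ M, a ≠ b → a ∩ b = ∅} with hS
      have hchainS : ∀ c ⊆ S, IsChain (· ⊆ ·) c → c.Nonempty →
          ∃ ub ∈ S, ∀ s ∈ c, s ⊆ ub := by
        intro c hcS hchain _
        refine ⟨⋃₀ c, ⟨?_, ?_⟩, fun s hs => subset_sUnion_of_mem hs⟩
        · exact sUnion_subset (fun s hs => (hcS hs).1)
        · rintro a ⟨s, hs, has⟩ b ⟨t, ht, hbt⟩ hne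
          rcases hchain.total hs ht with h | h
          · exact (hcS ht).2 a (h has) b hbt hne
          · exact (hcS hs).2 a has b (h hbt) hne
      obtain ⟨M, -, hMmax⟩ := zorn_subset_nonempty S hchainS ∅ ⟨empty_subset _, by simp⟩
      by_cases hMc : M.Countable
      · exfalso
        set U := ⋃ a ∈ M, (↑a : Set ι) with hU
        have hUc : U.Countable := hMc.biUnion (fun a _ => a.countable_toSet)
        have hbadc : {a ∈ 𝒜 | ∃ j ∈ U, j ∈ a}.Countable := by
          have : {a ∈ 𝒜 | ∃ j ∈ U, j ∈ a} ⊆ ⋃ j ∈ U, {a ∈ 𝒜 | j ∈ a} := by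
            rintro a ⟨ha, j, hjU, hja⟩
            exact Set.mem_biUnion hjU ⟨ha, hja⟩
          exact (hUc.biUnion (fun j _ => hex j)).mono this
        have : ¬(M ∪ {a ∈ 𝒜 | ∃ j ∈ U, j ∈ a}).Countable → False := fun h => h (hMc.union hbadc)
        obtain ⟨b, hb𝒜, hbn⟩ : ∃ b ∈ 𝒜, b ∉ M ∪ {a ∈ 𝒜 | ∃ j ∈ U, j ∈ a} := by
          by_contra hcon
          push_neg at hcon
          exact hunc ((hMc.union hbadc).mono hcon)
        simp only [Set.mem_union, not_or, Set.mem_setOf_eq, not_and, not_exists] at hbn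
        have hbdisj : ∀ j ∈ U, j ∉ b := by
          intro j hj hjb
          exact (hbn.2 hb𝒜) j hj hjb
        have hins : insert b M ∈ S := by
          constructor
          · exact Set.insert_subset hb𝒜 hMmax.prop.1
          · intro a' ha' b' hb' hne
            rcases ha' with rfl | ha' <;> rcases hb' with rfl | hb'
            · exact absurd rfl hne
            · ext j; simp only [Finset.mem_inter, Finset.notMem_empty, iff_false, not_and]
              intro hja'
              exact fun hjb' => hbdisj j (Set.mem_biUnion hb' hjb') hja'
            · ext j; simp only [Finset.mem_inter, Finset.notMem_empty, iff_false, not_and]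
              intro hja'
              exact hbdisj j (Set.mem_biUnion ha' hja')
            · exact hMmax.prop.2 a' ha' b' hb' hne
        have := hMmax.2 hins (Set.subset_insert b M)
        exact hbn.1 (this (Set.mem_insert b M))
      · exact ⟨∅, M, hMmax.prop.1, hMc, hMmax.prop.2⟩

lemma delta_system {ι : Type*} [DecidableEq ι] (𝒜 : Set (Finset ι)) (h : ¬𝒜.Countable) :
    ∃ r : Finset ι, ∃ 𝒜' ⊆ 𝒜, ¬𝒜'.Countable ∧
      ∀ a ∈ 𝒜', ∀ b ∈ 𝒜', a ≠ b → a ∩ b = r := by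
  have : ∃ n : ℕ, ¬{a ∈ 𝒜 | a.card = n}.Countable := by
    by_contra hcon
    push_neg at hcon
    have : 𝒜 ⊆ ⋃ n : ℕ, {a ∈ 𝒜 | a.card = n} := fun a ha => Set.mem_iUnion.2 ⟨a.card, ha, rfl⟩
    exact h ((Set.countable_iUnion hcon).mono this)
  obtain ⟨n, hn⟩ := this
  obtain ⟨r, 𝒜', hsub, hunc, hroot⟩ := delta_aux n {a ∈ 𝒜 | a.card = n}
    (fun a ha => ha.2.le) hn
  exact ⟨r, 𝒜', fun a ha => (hsub ha).1, hunc, hroot⟩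


open Cardinal Set

/-- `wu` is a pseudo-filter on the finite set `u`: a family of subsets of `u`
containing `u`, upward closed (within subsets of `u`), such that for every partition of
`u` into two pieces at least one piece belongs to it. -/
def IsPfil {ι : Type*} (u : Finset ι) (wu : Set (Set ι)) : Prop :=
  (∀ v ∈ wu, v ⊆ ↑u) ∧ (↑u : Set ι) ∈ wu ∧
  (∀ v₁ v₂ : Set ι, v₁ ∈ wu → v₁ ⊆ v₂ → v₂ ⊆ ↑u → v₂ ∈ wu) ∧
  ∀ v : Set ι, v ⊆ ↑u → (v ∈ wu ∨ (↑u \ v) ∈ wu)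

/-- `(W, w)` is a candidate: `W` is a set of finite subsets of the index type, `w u` is
a pseudo-filter on `u` for each `u ∈ W`, and for every finite `v` the set
`{u ∈ W | u ∩ v ∈ w u}` is finite. -/
def IsCandidate {ι : Type*} (W : Set (Finset ι)) (w : Finset ι → Set (Set ι)) : Prop :=
  (∀ u ∈ W, IsPfil u (w u)) ∧
  ∀ v : Finset ι, {u ∈ W | (↑u ∩ ↑v : Set ι) ∈ w u}.Finite

/-- The Boolean subalgebra of `B` generated by `X`: the smallest subset of `B`
containing `X ∪ {⊥, ⊤}` and closed under finite meets, finite joins and complements. -/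
def SubalgGen {B : Type*} [BooleanAlgebra B] (X : Set B) : Set B :=
  ⋂₀ {S : Set B | X ⊆ S ∧ ⊥ ∈ S ∧ ⊤ ∈ S ∧ (∀ a ∈ S, aᶜ ∈ S) ∧
    (∀ a ∈ S, ∀ b ∈ S, a ⊓ b ∈ S) ∧ ∀ a ∈ S, ∀ b ∈ S, a ⊔ b ∈ S}

/-- `h : B → Bool` is a Boolean-algebra homomorphism into the two-element algebra. -/
def IsBoolHom {B : Type*} [BooleanAlgebra B] (h : B → Bool) : Prop :=
  h ⊥ = false ∧ h ⊤ = true ∧ (∀ a, h aᶜ = !h a) ∧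
  (∀ a b, h (a ⊓ b) = (h a && h b)) ∧ ∀ a b, h (a ⊔ b) = (h a || h b)

/-- `B` with the distinguished elements `x i` realizes `BA(W, w)`: the `x i` generate
`B`; `⨅_{i ∈ u} x i = ⊥` for every `u ∈ W`; and every `f : ι → Bool` such that every
`u ∈ W` contains some `i` with `f i = false` extends to a homomorphism `B → Bool`. -/
def RealizesBA {ι B : Type*} [BooleanAlgebra B] (W : Set (Finset ι)) (x : ι → B) : Prop :=
  SubalgGen (Set.range x) = Set.univ ∧
  (∀ u ∈ W, u.inf x = ⊥) ∧
  ∀ f : ι → Bool, (∀ u ∈ W, ∃ i ∈ u, f i = false) →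
    ∃ h : B → Bool, IsBoolHom h ∧ ∀ i, h (x i) = f i


section Rep
variable {ι B : Type*} [BooleanAlgebra B] [DecidableEq ι] (x : ι → B)

/-- the monomial associated to a pair of finite sets -/
def Mon (q : Finset ι × Finset ι) : B :=
  q.1.inf x ⊓ q.2.inf (fun i => (x i)ᶜ)

lemma Mon_inf (q q' : Finset ι × Finset ι) :
    Mon x q ⊓ Mon x q' = Mon x (q.1 ∪ q'.1, q.2 ∪ q'.2) := by
  simp only [Mon, Finset.inf_union]
  rw [inf_inf_inf_comm]

lemma mem_closure_set {S : Set B} (hS : S ∈ {S : Set B | Set.range x ⊆ S ∧ ⊥ ∈ S ∧ ⊤ ∈ S ∧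
      (∀ a ∈ S, aᶜ ∈ S) ∧ (∀ a ∈ S, ∀ b ∈ S, a ⊓ b ∈ S) ∧ ∀ a ∈ S, ∀ b ∈ S, a ⊔ b ∈ S})
    {a : B} (ha : a ∈ SubalgGen (Set.range x)) : a ∈ S := ha S hS

lemma finset_sup_mem {γ : Type*} {S : Set B} (hbot : (⊥:B) ∈ S)
    (hsup : ∀ a ∈ S, ∀ b ∈ S, a ⊔ b ∈ S) (t : Finset γ) (f : γ → B)
    (h : ∀ i ∈ t, f i ∈ S) : t.sup f ∈ S := by
  induction t using Finset.cons_induction with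
  | empty => simpa using hbot
  | cons c t hct ih =>
    rw [Finset.sup_cons]
    exact hsup _ (h c (Finset.mem_cons_self c t)) _
      (ih (fun i hi => h i (Finset.mem_cons_of_mem hi)))

lemma finset_inf_mem {γ : Type*} {S : Set B} (htop : (⊤:B) ∈ S)
    (hinf : ∀ a ∈ S, ∀ b ∈ S, a ⊓ b ∈ S) (t : Finset γ) (f : γ → B)
    (h : ∀ i ∈ t, f i ∈ S) : t.inf f ∈ S := by
  induction t using Finset.cons_induction with
  | empty => simpa using htop
  | cons c t hct ih =>
    rw [Finset.inf_cons]
    exact hinf _ (h c (Finset.mem_cons_self c t)) _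
      (ih (fun i hi => h i (Finset.mem_cons_of_mem hi)))

lemma exists_rep (hgen : SubalgGen (Set.range x) = Set.univ) (a : B) :
    ∃ T : Finset (Finset ι × Finset ι), a = T.sup (Mon x) := by
  classical
  set S : Set B := {a | ∃ T : Finset (Finset ι × Finset ι), a = T.sup (Mon x)} with hSdef
  have hbot : (⊥ : B) ∈ S := ⟨∅, by simp⟩
  have htop : (⊤ : B) ∈ S := ⟨{(∅, ∅)}, by simp [Mon]⟩
  have hinf : ∀ a ∈ S, ∀ b ∈ S, a ⊓ b ∈ S := by
    rintro a ⟨T, rfl⟩ b ⟨T', rfl⟩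
    refine ⟨(T ×ˢ T').image (fun p => (p.1.1 ∪ p.2.1, p.1.2 ∪ p.2.2)), ?_⟩
    rw [Finset.sup_inf_sup, Finset.sup_image]
    exact Finset.sup_congr rfl (fun p _ => Mon_inf x p.1 p.2)
  have hsup : ∀ a ∈ S, ∀ b ∈ S, a ⊔ b ∈ S := by
    rintro a ⟨T, rfl⟩ b ⟨T', rfl⟩
    exact ⟨T ∪ T', by rw [Finset.sup_union]⟩
  have hxmem : ∀ i, x i ∈ S := fun i => ⟨{({i}, ∅)}, by simp [Mon]⟩
  have hxcmem : ∀ i, (x i)ᶜ ∈ S := fun i => ⟨{(∅, {i})}, by simp [Mon]⟩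
  have hcomplMon : ∀ q : Finset ι × Finset ι, (Mon x q)ᶜ ∈ S := by
    intro q
    have : (Mon x q)ᶜ = (q.1.sup fun i => (x i)ᶜ) ⊔ (q.2.sup fun i => x i) := by
      simp only [Mon, compl_inf]
      congr 1
      · induction q.1 using Finset.cons_induction with
        | empty => simp
        | cons c t hct ih => simp [Finset.inf_cons, Finset.sup_cons, compl_inf, ih]
      · induction q.2 using Finset.cons_induction with
        | empty => simp
        | cons c t hct ih => simp [Finset.inf_cons, Finset.sup_cons, compl_inf, ih]
    rw [this]
    exact hsup _ (finset_sup_mem hbot hsup _ _ fun i _ => hxcmem i) _ (finset_sup_mem hbot hsup _ _ fun i _ => hxmem i)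
  have hcompl : ∀ a ∈ S, aᶜ ∈ S := by
    rintro a ⟨T, rfl⟩
    have : (T.sup (Mon x))ᶜ = T.inf (fun q => (Mon x q)ᶜ) := by
      induction T using Finset.cons_induction with
      | empty => simp
      | cons c t hct ih => simp [Finset.sup_cons, Finset.inf_cons, compl_sup, ih]
    rw [this]
    exact finset_inf_mem htop hinf _ _ (fun q _ => hcomplMon q)
  have key : SubalgGen (Set.range x) ⊆ S :=
    fun a ha => mem_closure_set x ⟨by rintro _ ⟨i, rfl⟩; exact hxmem i,
      hbot, htop, hcompl, hinf, hsup⟩ ha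
  exact key (hgen ▸ Set.mem_univ a)

end Rep

section Good
variable {ι B : Type*} [BooleanAlgebra B] [DecidableEq ι]
  {W : Set (Finset ι)} {x : ι → B}

/-- the pair (p,n) describes a consistent monomial -/
def GoodPair (W : Set (Finset ι)) (p n : Finset ι) : Prop :=
  p ∩ n = ∅ ∧ ∀ u ∈ W, ¬ u ⊆ p

lemma boolHom_inf_true {h : B → Bool} (hh : IsBoolHom h) {γ : Type*} (t : Finset γ)
    (f : γ → B) (hf : ∀ i ∈ t, h (f i) = true) : h (t.inf f) = true := by
  induction t using Finset.cons_induction with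
  | empty => simpa using hh.2.1
  | cons c t hct ih =>
    rw [Finset.inf_cons, hh.2.2.2.1]
    rw [hf c (Finset.mem_cons_self c t), ih (fun i hi => hf i (Finset.mem_cons_of_mem hi))]
    rfl

lemma Mon_ne_bot_of_good (hr : RealizesBA W x) {p n : Finset ι}
    (hg : GoodPair W p n) : Mon x (p, n) ≠ ⊥ := by
  classical
  obtain ⟨hdisj, hW⟩ := hg
  obtain ⟨h, hh, hhx⟩ := hr.2.2 (fun i => decide (i ∈ p)) (by
    intro u hu
    obtain ⟨i, hiu, hip⟩ := Finset.not_subset.1 (hW u hu)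
    exact ⟨i, hiu, by simp [hip]⟩)
  intro hbot
  have h1 : h (Mon x (p, n)) = true := by
    rw [Mon, hh.2.2.2.1]
    have e1 : h (p.inf x) = true := boolHom_inf_true hh p x (fun i hi => by simp [hhx, hi])
    have e2 : h (n.inf (fun i => (x i)ᶜ)) = true := by
      refine boolHom_inf_true hh n _ (fun i hi => ?_)
      have hip : i ∉ p := fun hip =>
        (Finset.notMem_empty i) (hdisj ▸ Finset.mem_inter.2 ⟨hip, hi⟩)
      rw [hh.2.2.1, hhx]
      simp [hip]
    rw [e1, e2]; rfl
  rw [hbot, hh.1] at h1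
  exact absurd h1 (by simp)

lemma good_of_Mon_ne_bot (hr : RealizesBA W x) {p n : Finset ι}
    (hne : Mon x (p, n) ≠ ⊥) : GoodPair W p n := by
  constructor
  · by_contra hcon
    obtain ⟨i, hi⟩ := Finset.nonempty_iff_ne_empty.2 hcon
    rw [Finset.mem_inter] at hi
    apply hne
    have h1 : Mon x (p, n) ≤ x i ⊓ (x i)ᶜ :=
      inf_le_inf (Finset.inf_le hi.1) (Finset.inf_le hi.2)
    simpa using le_bot_iff.1 (by simpa using h1)
  · intro u hu hup
    apply hne
    have h1 : Mon x (p, n) ≤ u.inf x :=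
      le_trans inf_le_left (Finset.inf_mono hup)
    rw [hr.2.1 u hu] at h1
    exact le_bot_iff.1 h1

end Good

section Core
variable {ι : Type*} [DecidableEq ι]

lemma pairs_countable (W : Set (Finset ι)) (w : Finset ι → Set (Set ι))
    (hc : IsCandidate W w) (P : Set (Finset ι × Finset ι))
    (hgood : ∀ q ∈ P, GoodPair W q.1 q.2)
    (hincomp : ∀ q ∈ P, ∀ q' ∈ P, q ≠ q' →
      ¬ GoodPair W (q.1 ∪ q'.1) (q.2 ∪ q'.2)) :
    P.Countable := by
  classical
  by_contra hunc
  set d : Finset ι × Finset ι → Finset ι := fun q => q.1 ∪ q.2 with hd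
  set 𝒜 : Set (Finset ι) := d '' P with h𝒜
  have h𝒜unc : ¬𝒜.Countable := by
    intro hcnt
    apply hunc
    have hcov : P ⊆ ⋃ v ∈ 𝒜, {q ∈ P | d q = v} :=
      fun q hq => Set.mem_biUnion ⟨q, hq, rfl⟩ ⟨hq, rfl⟩
    refine ((hcnt.biUnion (fun v _ => ?_)).mono hcov)
    refine Set.Finite.countable (Set.Finite.subset (Set.finite_coe_iff.1 ?_) (?_ :
      {q ∈ P | d q = v} ⊆ ↑(v.powerset ×ˢ v.powerset)))
    · exact Finset.finite_toSet _
    · rintro q ⟨-, rfl⟩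
      simp only [Finset.coe_product, Set.mem_prod, Finset.mem_coe, Finset.mem_powerset]
      exact ⟨Finset.subset_union_left, Finset.subset_union_right⟩
  obtain ⟨r, 𝒜₁, h𝒜₁sub, h𝒜₁unc, hroot⟩ := delta_system 𝒜 h𝒜unc
  -- choose a section g
  have hsec : ∀ v ∈ 𝒜₁, ∃ q, q ∈ P ∧ d q = v := fun v hv => by
    obtain ⟨q, hq, rfl⟩ := h𝒜₁sub hv; exact ⟨q, hq, rfl⟩
  set g : Finset ι → Finset ι × Finset ι := fun v =>
    if h : ∃ q, q ∈ P ∧ d q = v then h.choose else (∅, ∅) with hg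
  have hgP : ∀ v ∈ 𝒜₁, g v ∈ P ∧ (g v).1 ∪ (g v).2 = v := by
    intro v hv
    have h := hsec v hv
    simp only [hg, dif_pos h]
    exact h.choose_spec
  -- refine to constant trace on the root
  have : ∃ r₀ ∈ r.powerset, ¬{v ∈ 𝒜₁ | (g v).1 ∩ r = r₀}.Countable := by
    by_contra hcon
    push_neg at hcon
    apply h𝒜₁unc
    have hcov : 𝒜₁ ⊆ ⋃ r₀ ∈ (↑r.powerset : Set (Finset ι)), {v ∈ 𝒜₁ | (g v).1 ∩ r = r₀} := by
      intro v hv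
      exact Set.mem_biUnion (by simp [Finset.mem_powerset]) ⟨hv, rfl⟩
    exact (((r.powerset).finite_toSet.countable).biUnion
      (fun r₀ hr₀ => hcon r₀ hr₀)).mono hcov
  obtain ⟨r₀, -, h𝒜₂unc⟩ := this
  set 𝒜₂ := {v ∈ 𝒜₁ | (g v).1 ∩ r = r₀} with h𝒜₂
  -- basic facts
  have hveq : ∀ v ∈ 𝒜₂, (g v).1 ∪ (g v).2 = v := fun v hv => (hgP v hv.1).2
  have hvP : ∀ v ∈ 𝒜₂, g v ∈ P := fun v hv => (hgP v hv.1).1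
  have hcross : ∀ v ∈ 𝒜₂, ∀ v' ∈ 𝒜₂, v ≠ v' → (g v).1 ∩ (g v').2 = ∅ := by
    intro v hv v' hv' hne
    ext i
    simp only [Finset.mem_inter, Finset.notMem_empty, iff_false, not_and]
    intro hi1 hi2
    have hir : i ∈ r := by
      rw [← hroot v hv.1 v' hv'.1 hne]
      exact Finset.mem_inter.2 ⟨(hveq v hv) ▸ Finset.mem_union_left _ hi1,
        (hveq v' hv') ▸ Finset.mem_union_right _ hi2⟩
    have : i ∈ (g v').1 := by
      have h1 : i ∈ (g v).1 ∩ r := Finset.mem_inter.2 ⟨hi1, hir⟩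
      rw [hv.2] at h1
      rw [← hv'.2] at h1
      exact (Finset.mem_inter.1 h1).1
    have := Finset.mem_inter.2 ⟨this, hi2⟩
    rw [(hgood _ (hvP v' hv')).1] at this
    exact Finset.notMem_empty i this
  -- the key: for distinct elements there must be a covering u ∈ W
  have hkey : ∀ v ∈ 𝒜₂, ∀ v' ∈ 𝒜₂, v ≠ v' →
      ∃ u ∈ W, u ⊆ (g v).1 ∪ (g v').1 := by
    intro v hv v' hv' hne
    have hgv := hvP v hv
    have hgv' := hvP v' hv'
    have hqne : g v ≠ g v' := by
      intro h
      apply hne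
      rw [← hveq v hv, ← hveq v' hv', h]
    have := hincomp _ hgv _ hgv' hqne
    rw [GoodPair] at this
    push_neg at this
    have hdisj : ((g v).1 ∪ (g v').1) ∩ ((g v).2 ∪ (g v').2) = ∅ := by
      ext i
      simp only [Finset.mem_inter, Finset.mem_union, Finset.notMem_empty, iff_false, not_and]
      rintro (h1 | h1) (h2 | h2)
      · exact Finset.notMem_empty i ((hgood _ hgv).1 ▸ Finset.mem_inter.2 ⟨h1, h2⟩)
      · exact Finset.notMem_empty i
          ((hcross v hv v' hv' hne) ▸ Finset.mem_inter.2 ⟨h1, h2⟩)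
      · exact Finset.notMem_empty i
          ((hcross v' hv' v hv hne.symm) ▸ Finset.mem_inter.2 ⟨h1, h2⟩)
      · exact Finset.notMem_empty i ((hgood _ hgv').1 ▸ Finset.mem_inter.2 ⟨h1, h2⟩)
    obtain ⟨u, hu, hsub⟩ := this hdisj
    exact ⟨u, hu, hsub⟩
  -- pseudo-filter: the covering u is captured by one of the two sides
  have hfil : ∀ v ∈ 𝒜₂, ∀ v' ∈ 𝒜₂, ∀ u ∈ W, u ⊆ (g v).1 ∪ (g v').1 →
      ((↑u ∩ ↑(g v).1 : Set ι) ∈ w u ∨ (↑u ∩ ↑(g v').1 : Set ι) ∈ w u) := by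
    intro v hv v' hv' u hu hsub
    obtain ⟨hwsub, hwu, hwup, hwpart⟩ := hc.1 u hu
    rcases hwpart (↑u ∩ ↑(g v).1) Set.inter_subset_left with h | h
    · exact Or.inl h
    · refine Or.inr (hwup _ _ h ?_ Set.inter_subset_left)
      intro i hi
      simp only [Set.mem_diff, Set.mem_inter_iff, Finset.mem_coe, not_and] at hi ⊢
      refine ⟨hi.1, ?_⟩
      rcases Finset.mem_union.1 (hsub hi.1) with h1 | h1
      · exact absurd h1 (hi.2 hi.1)
      · exact h1
  -- the finite capture sets
  set F : Finset ι → Set (Finset ι) := fun v => {u ∈ W | (↑u ∩ ↑(g v).1 : Set ι) ∈ w u}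
    with hF
  have hFfin : ∀ v, (F v).Finite := fun v => hc.2 (g v).1
  -- each u ∈ F v captures at most one other v'
  have hsubsing : ∀ v ∈ 𝒜₂, ∀ u ∈ W, ¬ u ⊆ (g v).1 →
      {v' ∈ 𝒜₂ | v' ≠ v ∧ u ⊆ (g v).1 ∪ (g v').1}.Subsingleton := by
    intro v hv u hu hnsub v₁ hv₁ v₂ hv₂
    by_contra hne
    obtain ⟨i, hiu, hip⟩ := Finset.not_subset.1 hnsub
    have hmem : ∀ v' ∈ ({v₁, v₂} : Set (Finset ι)), i ∈ (g v').1 := by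
      rintro v' (rfl | rfl)
      · rcases Finset.mem_union.1 (hv₁.2.2 hiu) with h | h
        · exact absurd h hip
        · exact h
      · rcases Finset.mem_union.1 (hv₂.2.2 hiu) with h | h
        · exact absurd h hip
        · exact h
    have hir : i ∈ r := by
      rw [← hroot v₁ hv₁.1.1 v₂ hv₂.1.1 hne]
      refine Finset.mem_inter.2 ⟨?_, ?_⟩
      · exact (hveq v₁ hv₁.1) ▸ Finset.mem_union_left _ (hmem v₁ (by simp))
      · exact (hveq v₂ hv₂.1) ▸ Finset.mem_union_left _ (hmem v₂ (by simp))
    apply hip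
    have h1 : i ∈ (g v₁).1 ∩ r := Finset.mem_inter.2 ⟨hmem v₁ (by simp), hir⟩
    rw [hv₁.1.2, ← hv.2] at h1
    exact (Finset.mem_inter.1 h1).1
  -- the L sets are finite
  set L : Finset ι → Set (Finset ι) := fun v =>
    {v' ∈ 𝒜₂ | v' ≠ v ∧ ∃ u ∈ F v, u ⊆ (g v).1 ∪ (g v').1} with hL
  have hLfin : ∀ v ∈ 𝒜₂, (L v).Finite := by
    intro v hv
    have hcov : L v ⊆ ⋃ u ∈ F v, {v' ∈ 𝒜₂ | v' ≠ v ∧ u ⊆ (g v).1 ∪ (g v').1} := by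
      rintro v' ⟨hv', hne, u, hu, hsub⟩
      exact Set.mem_biUnion hu ⟨hv', hne, hsub⟩
    refine Set.Finite.subset (Set.Finite.biUnion (hFfin v) (fun u hu => ?_)) hcov
    refine Set.Subsingleton.finite (hsubsing v hv u hu.1 ?_)
    exact (hgood _ (hvP v hv)).2 u hu.1
  -- find the contradiction
  have h𝒜₂inf : 𝒜₂.Infinite := fun hfin => h𝒜₂unc hfin.countable
  set e : ℕ ↪ 𝒜₂ := h𝒜₂inf.natEmbedding _ with he
  set J : Set (Finset ι) := Set.range (fun n => (e n : Finset ι)) with hJ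
  have hJsub : J ⊆ 𝒜₂ := by rintro _ ⟨n, rfl⟩; exact (e n).2
  have hJcnt : J.Countable := Set.countable_range _
  have hJinf : J.Infinite := by
    apply Set.infinite_range_of_injective
    intro a b hab
    exact e.injective (Subtype.ext hab)
  have hCcnt : (J ∪ ⋃ v ∈ J, L v).Countable :=
    hJcnt.union (hJcnt.biUnion (fun v hv => ((hLfin v (hJsub hv)).countable)))
  obtain ⟨vs, hvs𝒜₂, hvsn⟩ : ∃ vs ∈ 𝒜₂, vs ∉ J ∪ ⋃ v ∈ J, L v := by
    by_contra hcon
    push_neg at hcon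
    exact h𝒜₂unc (hCcnt.mono hcon)
  simp only [Set.mem_union, not_or, Set.mem_iUnion, not_exists] at hvsn
  have : J ⊆ L vs := by
    rintro _ ⟨n, rfl⟩
    set v := (e n : Finset ι)
    have hv : v ∈ 𝒜₂ := (e n).2
    have hvne : vs ≠ v := by
      intro h
      exact hvsn.1 (h ▸ ⟨n, rfl⟩)
    obtain ⟨u, hu, hsub⟩ := hkey v hv vs hvs𝒜₂ (Ne.symm hvne)
    rcases hfil v hv vs hvs𝒜₂ u hu hsub with h | h
    · exfalso
      apply hvsn.2 v ⟨n, rfl⟩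
      exact ⟨hvs𝒜₂, hvne, u, ⟨hu, h⟩, hsub⟩
    · refine ⟨hv, Ne.symm hvne, u, ⟨hu, h⟩, ?_⟩
      rwa [Finset.union_comm]
  exact hJinf ((hLfin vs hvs𝒜₂).subset this)

end Core

/-- If `(W, w)` is a candidate and `B` (with generators `x i`) realizes `BA(W, w)`,
then `B` satisfies the c.c.c.; moreover if the index set is infinite then `B` has
cardinality at most that of the index set. -/
theorem stmt_2 (ι B : Type) [BooleanAlgebra B]
    (W : Set (Finset ι)) (w : Finset ι → Set (Set ι)) (hc : IsCandidate W w)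
    (x : ι → B) (hr : RealizesBA W x) :
    (∀ S : Set B, (∀ a ∈ S, a ≠ ⊥) → (S.Pairwise fun a b => a ⊓ b = ⊥) → S.Countable) ∧
    (ℵ₀ ≤ #ι → #B ≤ #ι) := by
  classical
  constructor
  · -- the c.c.c.
    intro S hne hpair
    -- every nonzero element dominates a nonzero monomial
    have hmon : ∀ a ∈ S, ∃ q : Finset ι × Finset ι, Mon x q ≠ ⊥ ∧ Mon x q ≤ a := by
      intro a ha
      obtain ⟨T, rfl⟩ := exists_rep x hr.1 a
      by_contra hcon
      push_neg at hcon
      apply hne _ ha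
      refine (Finset.sup_eq_bot_iff (Mon x) T).2 (fun q hq => ?_)
      by_contra hqb
      exact absurd (Finset.le_sup hq) (hcon q hqb)
    set φ : B → Finset ι × Finset ι := fun a =>
      if h : ∃ q : Finset ι × Finset ι, Mon x q ≠ ⊥ ∧ Mon x q ≤ a then h.choose
      else (∅, ∅) with hφdef
    have hφ : ∀ a ∈ S, Mon x (φ a) ≠ ⊥ ∧ Mon x (φ a) ≤ a := by
      intro a ha
      have h := hmon a ha
      simp only [hφdef, dif_pos h]
      exact h.choose_spec
    have hφinj : Set.InjOn φ S := by
      intro a ha b hb hab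
      by_contra hne'
      have h1 : Mon x (φ a) ≤ a ⊓ b := le_inf (hφ a ha).2 (hab ▸ (hφ b hb).2)
      rw [hpair ha hb hne'] at h1
      exact (hφ a ha).1 (le_bot_iff.1 h1)
    set P : Set (Finset ι × Finset ι) := φ '' S with hP
    have hgood : ∀ q ∈ P, GoodPair W q.1 q.2 := by
      rintro q ⟨a, ha, rfl⟩
      exact good_of_Mon_ne_bot hr (hφ a ha).1
    have hincomp : ∀ q ∈ P, ∀ q' ∈ P, q ≠ q' →
        ¬ GoodPair W (q.1 ∪ q'.1) (q.2 ∪ q'.2) := by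
      rintro q ⟨a, ha, rfl⟩ q' ⟨b, hb, rfl⟩ hne'
      have hab : a ≠ b := fun h => hne' (h ▸ rfl)
      intro hgp
      have h1 : Mon x ((φ a).1 ∪ (φ b).1, (φ a).2 ∪ (φ b).2) ≠ ⊥ :=
        Mon_ne_bot_of_good hr hgp
      apply h1
      rw [← Mon_inf]
      have h2 : Mon x (φ a) ⊓ Mon x (φ b) ≤ a ⊓ b :=
        inf_le_inf (hφ a ha).2 (hφ b hb).2
      rw [hpair ha hb hab] at h2
      exact le_bot_iff.1 h2
    have hPcnt : P.Countable := pairs_countable W w hc P hgood hincomp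
    exact (Set.mapsTo_image φ S).countable_of_injOn hφinj hPcnt
  · -- the cardinality bound
    intro hℵ
    haveI : Infinite ι := Cardinal.infinite_iff.2 hℵ
    have hsurj : Function.Surjective (fun T : Finset (Finset ι × Finset ι) => T.sup (Mon x)) := by
      intro a
      obtain ⟨T, hT⟩ := exists_rep x hr.1 a
      exact ⟨T, hT.symm⟩
    calc #B ≤ #(Finset (Finset ι × Finset ι)) := Cardinal.mk_le_of_surjective hsurj
      _ = #(Finset ι × Finset ι) := Cardinal.mk_finset_of_infinite _
      _ = #(Finset ι) * #(Finset ι) := by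
          simp [Cardinal.mk_prod]
      _ = #ι * #ι := by rw [Cardinal.mk_finset_of_infinite]
      _ = #ι := Cardinal.mul_eq_self hℵ
end

section
/- Let κ be a regular uncountable cardinal and let (W, w) be a (λ, κ)-candidate, i.e., W is a set of finite subsets of λ, w(u) ∈ pfil(u) for each u ∈ W, and for every finite v ⊆ λ the set {u ∈ W : u ∩ v ∈ w(u)} has cardinality less than κ. Then any Boolean algebra B with elements x_i (i < λ) realizing BA(W, w) satisfies the κ⁺-c.c.: every set of pairwise disjoint nonzero elements of B has cardinality at most κ. -/
open Cardinal Set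

/-- A `(λ, κ)`-candidate: like a candidate, but the sets `{u ∈ W | u ∩ v ∈ w u}` are
only required to have cardinality `< κ`. -/
def IsCandidateLt {ι : Type*} (κ : Cardinal) (W : Set (Finset ι))
    (w : Finset ι → Set (Set ι)) : Prop :=
  (∀ u ∈ W, IsPfil u (w u)) ∧
  ∀ v : Finset ι, #({u ∈ W | (↑u ∩ ↑v : Set ι) ∈ w u} : Set (Finset ι)) < κ

namespace Stmt3Aux

attribute [local instance] Classical.propDecidable

open Cardinal Set

/-! ### Normal form in the generated subalgebra -/

variable {ι : Type} {B : Type} [BooleanAlgebra B]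

/-- Elementary product. -/
def eP (x : ι → B) (p : Finset ι × Finset ι) : B :=
  p.1.inf x ⊓ p.2.inf (fun i => (x i)ᶜ)

/-- Elements which are finite joins of elementary products. -/
def NF (x : ι → B) : Set B :=
  {a | ∃ F : Finset (Finset ι × Finset ι), a = F.sup (eP x)}

lemma eP_inf (x : ι → B) (p q : Finset ι × Finset ι) :
    eP x p ⊓ eP x q = eP x (p.1 ∪ q.1, p.2 ∪ q.2) := by
  simp only [eP, Finset.inf_union]
  exact inf_inf_inf_comm _ _ _ _

lemma bot_mem_NF (x : ι → B) : ⊥ ∈ NF x := ⟨∅, by simp⟩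

lemma top_mem_NF (x : ι → B) : ⊤ ∈ NF x := ⟨{(∅, ∅)}, by simp [eP]⟩

lemma x_mem_NF (x : ι → B) (i : ι) : x i ∈ NF x := ⟨{({i}, ∅)}, by simp [eP]⟩

lemma compl_x_mem_NF (x : ι → B) (i : ι) : (x i)ᶜ ∈ NF x := ⟨{(∅, {i})}, by simp [eP]⟩

lemma sup_mem_NF (x : ι → B) {a b : B} (ha : a ∈ NF x) (hb : b ∈ NF x) : a ⊔ b ∈ NF x := by
  obtain ⟨F, rfl⟩ := ha
  obtain ⟨G, rfl⟩ := hb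
  exact ⟨F ∪ G, (Finset.sup_union).symm⟩

lemma inf_mem_NF (x : ι → B) {a b : B} (ha : a ∈ NF x) (hb : b ∈ NF x) : a ⊓ b ∈ NF x := by
  obtain ⟨F, rfl⟩ := ha
  obtain ⟨G, rfl⟩ := hb
  refine ⟨(F ×ˢ G).image (fun pq => (pq.1.1 ∪ pq.2.1, pq.1.2 ∪ pq.2.2)), ?_⟩
  rw [Finset.sup_image, Finset.sup_inf_sup]
  apply Finset.sup_congr rfl
  intro pq _
  exact (eP_inf x pq.1 pq.2).trans rfl

lemma compl_finset_inf {γ : Type} (s : Finset γ) (f : γ → B) :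
    (s.inf f)ᶜ = s.sup (fun i => (f i)ᶜ) := by
  induction s using Finset.induction_on with
  | empty => simp
  | insert _ _ h ih => rw [Finset.inf_insert, Finset.sup_insert, compl_inf, ih]

lemma finsetSup_mem_NF (x : ι → B) {γ : Type} (s : Finset γ) (f : γ → B)
    (hf : ∀ i ∈ s, f i ∈ NF x) : s.sup f ∈ NF x := by
  induction s using Finset.induction_on with
  | empty => simpa using bot_mem_NF x
  | insert _ _ h ih =>
    rw [Finset.sup_insert]
    exact sup_mem_NF x (hf _ (Finset.mem_insert_self _ _))
      (ih (fun i hi => hf i (Finset.mem_insert_of_mem hi)))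

lemma compl_eP_mem_NF (x : ι → B) (p : Finset ι × Finset ι) : (eP x p)ᶜ ∈ NF x := by
  rw [eP, compl_inf, compl_finset_inf, compl_finset_inf]
  apply sup_mem_NF x
  · exact finsetSup_mem_NF x _ _ (fun i _ => compl_x_mem_NF x i)
  · apply finsetSup_mem_NF x
    intro i _
    rw [compl_compl]
    exact x_mem_NF x i

lemma compl_mem_NF (x : ι → B) {a : B} (ha : a ∈ NF x) : aᶜ ∈ NF x := by
  obtain ⟨F, rfl⟩ := ha
  induction F using Finset.induction_on with
  | empty => simpa using top_mem_NF x
  | insert _ _ h ih =>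
    rw [Finset.sup_insert, compl_sup]
    exact inf_mem_NF x (compl_eP_mem_NF x _) ih

lemma subalgGen_subset_NF (x : ι → B) : SubalgGen (Set.range x) ⊆ NF x := by
  intro a ha
  refine Set.mem_sInter.1 ha (NF x) ⟨?_, bot_mem_NF x, top_mem_NF x,
    fun b hb => compl_mem_NF x hb, fun b hb c hc => inf_mem_NF x hb hc,
    fun b hb c hc => sup_mem_NF x hb hc⟩
  rintro b ⟨i, rfl⟩
  exact x_mem_NF x i

/-! ### Two-valued homomorphisms -/

lemma hom_inf_true {γ : Type} {h : B → Bool} (hh : IsBoolHom h) (s : Finset γ) (f : γ → B) :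
    h (s.inf f) = true ↔ ∀ i ∈ s, h (f i) = true := by
  induction s using Finset.induction_on with
  | empty => simp [hh.2.1]
  | insert _ _ hnotmem ih =>
    rw [Finset.inf_insert, hh.2.2.2.1]
    simp only [Bool.and_eq_true, ih, Finset.mem_insert]
    constructor
    · rintro ⟨h1, h2⟩ i (rfl | hi)
      · exact h1
      · exact h2 i hi
    · intro h1
      exact ⟨h1 _ (Or.inl rfl), fun i hi => h1 i (Or.inr hi)⟩

lemma eP_ne_bot_facts {W : Set (Finset ι)} {x : ι → B} (hr : RealizesBA W x)
    (p : Finset ι × Finset ι) (hne : eP x p ≠ ⊥) :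
    p.1 ∩ p.2 = ∅ ∧ ∀ u ∈ W, ¬ u ⊆ p.1 := by
  constructor
  · by_contra hcon
    obtain ⟨i, hi⟩ := Finset.nonempty_iff_ne_empty.2 hcon
    rw [Finset.mem_inter] at hi
    apply hne
    have h1 : eP x p ≤ x i ⊓ (x i)ᶜ :=
      le_inf (inf_le_left.trans (Finset.inf_le hi.1)) (inf_le_right.trans (Finset.inf_le hi.2))
    rw [inf_compl_eq_bot] at h1
    exact le_bot_iff.1 h1
  · intro u hu hsub
    apply hne
    have h1 : eP x p ≤ u.inf x := inf_le_left.trans (Finset.inf_mono hsub)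
    rw [hr.2.1 u hu] at h1
    exact le_bot_iff.1 h1

lemma pair_lemma {W : Set (Finset ι)} {x : ι → B} (hr : RealizesBA W x)
    (a b a' b' : Finset ι) (hdisj : (a ∪ a') ∩ (b ∪ b') = ∅)
    (hW : ∀ u ∈ W, ¬ u ⊆ a ∪ a') :
    eP x (a, b) ⊓ eP x (a', b') ≠ ⊥ := by
  have hf : ∀ u ∈ W, ∃ i ∈ u, (fun i => decide (i ∈ a ∪ a')) i = false := by
    intro u hu
    obtain ⟨i, hi, hi2⟩ := Finset.not_subset.1 (hW u hu)
    exact ⟨i, hi, by simpa using hi2⟩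
  obtain ⟨h, hh, hhx⟩ := hr.2.2 (fun i => decide (i ∈ a ∪ a')) hf
  intro hbot
  have hx1 : ∀ (c : Finset ι), c ⊆ a ∪ a' → h (c.inf x) = true := by
    intro c hc
    rw [hom_inf_true hh]
    intro i hi
    rw [hhx i]
    simpa using hc hi
  have hx2 : ∀ (c : Finset ι), c ⊆ b ∪ b' → h (c.inf (fun i => (x i)ᶜ)) = true := by
    intro c hc
    rw [hom_inf_true hh]
    intro i hi
    rw [hh.2.2.1, hhx i]
    have : i ∉ a ∪ a' := by
      intro hmem
      have : i ∈ (a ∪ a') ∩ (b ∪ b') := Finset.mem_inter.2 ⟨hmem, hc hi⟩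
      rw [hdisj] at this
      exact absurd this (Finset.notMem_empty i)
    simpa using this
  have htrue : h (eP x (a, b) ⊓ eP x (a', b')) = true := by
    rw [hh.2.2.2.1]
    simp only [eP, hh.2.2.2.1]
    rw [hx1 a Finset.subset_union_left, hx1 a' Finset.subset_union_right,
      hx2 b Finset.subset_union_left, hx2 b' Finset.subset_union_right]
    rfl
  rw [hbot] at htrue
  rw [hh.1] at htrue
  exact Bool.false_ne_true htrue

end Stmt3Aux

namespace Stmt3Aux

attribute [local instance] Classical.propDecidable

open Cardinal Set

/-! ### Cardinal helpers -/

lemma biUnion_lt {α β : Type} {θ : Cardinal} (hreg : θ.IsRegular) {s : Set α} {t : α → Set β}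
    (hs : #s < θ) (ht : ∀ a ∈ s, #(t a) < θ) : #(⋃ a ∈ s, t a) < θ :=
  (Cardinal.card_biUnion_lt_iff_forall_of_isRegular hreg hs).2 ht

lemma fiber_lemma {α β : Type} {θ : Cardinal} (hreg : θ.IsRegular) {s : Set α} (f : α → β)
    (him : #(f '' s) < θ) (hfib : ∀ b, #((s ∩ f ⁻¹' {b} : Set α)) < θ) : #s < θ := by
  have hsub : s ⊆ ⋃ b ∈ f '' s, s ∩ f ⁻¹' {b} := by
    intro a ha
    exact mem_biUnion ⟨a, ha, rfl⟩ ⟨ha, rfl⟩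
  exact (mk_le_mk_of_subset hsub).trans_lt (biUnion_lt hreg him (fun b _ => hfib b))

lemma exists_fiber {α β : Type} {θ : Cardinal} (hreg : θ.IsRegular) {s : Set α} (f : α → β)
    (him : #(f '' s) < θ) (hs : θ ≤ #s) : ∃ b, θ ≤ #((s ∩ f ⁻¹' {b} : Set α)) := by
  by_contra h; push_neg at h
  exact absurd (fiber_lemma hreg f him (fun b => h b)) (not_lt.2 hs)

/-! ### Delta system lemma -/

lemma delta_aux {ι : Type} {θ : Cardinal} (hreg : θ.IsRegular) (hθ : ℵ₀ < θ) :
    ∀ n : ℕ, ∀ A : Set (Finset ι), (∀ a ∈ A, a.card = n) → θ ≤ #A →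
    ∃ (r : Finset ι) (A' : Set (Finset ι)), A' ⊆ A ∧ θ ≤ #A' ∧
      ∀ a ∈ A', ∀ b ∈ A', a ≠ b → a ∩ b = r := by
  intro n
  induction n with
  | zero =>
    intro A hcard hA
    exfalso
    have hsub : A ⊆ {∅} := by
      intro a ha
      simpa [Finset.card_eq_zero] using hcard a ha
    have h1 : #A ≤ 1 := (mk_le_mk_of_subset hsub).trans (le_of_eq (mk_singleton _))
    exact absurd (hA.trans h1) (not_le.2 (one_lt_aleph0.trans hθ))
  | succ n ih =>
    intro A hcard hA
    by_cases hx : ∃ x : ι, θ ≤ #{a ∈ A | x ∈ a}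
    · obtain ⟨x, hx⟩ := hx
      have hinj : InjOn (fun a : Finset ι => a.erase x) {a ∈ A | x ∈ a} := by
        intro a ha b hb he
        have h2 : insert x (a.erase x) = insert x (b.erase x) := by
          simp only at he; rw [he]
        rwa [Finset.insert_erase ha.2, Finset.insert_erase hb.2] at h2
      set A₁ := (fun a : Finset ι => a.erase x) '' {a ∈ A | x ∈ a} with hA₁def
      have hA₁card : θ ≤ #A₁ := by
        rw [hA₁def, mk_image_eq_of_injOn _ _ hinj]; exact hx
      have hA₁n : ∀ b ∈ A₁, b.card = n := by
        rintro b ⟨a, ha, rfl⟩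
        rw [Finset.card_erase_of_mem ha.2, hcard a ha.1]
        omega
      obtain ⟨r', A₁', hsub', hcard', hroot'⟩ := ih A₁ hA₁n hA₁card
      refine ⟨insert x r', {a | (a ∈ A ∧ x ∈ a) ∧ a.erase x ∈ A₁'}, fun a ha => ha.1.1, ?_, ?_⟩
      · have himg : (fun a : Finset ι => a.erase x) '' {a | (a ∈ A ∧ x ∈ a) ∧ a.erase x ∈ A₁'}
            = A₁' := by
          apply Set.Subset.antisymm
          · rintro b ⟨a, ha, rfl⟩; exact ha.2
          · intro b hb
            obtain ⟨a, ha, rfl⟩ := hsub' hb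
            exact ⟨a, ⟨ha, hb⟩, rfl⟩
        have h3 := mk_image_eq_of_injOn _ _ (hinj.mono (s₁ := {a | (a ∈ A ∧ x ∈ a) ∧ a.erase x ∈ A₁'}) (fun a ha => ha.1))
        rw [himg] at h3; rw [← h3]; exact hcard'
      · intro a ha b hb hne
        have hax : x ∈ a := ha.1.2
        have hbx : x ∈ b := hb.1.2
        have hee : a.erase x ≠ b.erase x := by
          intro he; apply hne
          rw [← Finset.insert_erase hax, he, Finset.insert_erase hbx]
        have h1 : a.erase x ∩ b.erase x = r' := hroot' _ ha.2 _ hb.2 hee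
        ext i
        simp only [Finset.mem_inter, Finset.mem_insert]
        constructor
        · rintro ⟨hia, hib⟩
          by_cases hix : i = x
          · exact Or.inl hix
          · right; rw [← h1]
            simp [Finset.mem_erase, Finset.mem_inter, hix, hia, hib]
        · rintro (rfl | hir)
          · exact ⟨hax, hbx⟩
          · rw [← h1] at hir
            simp only [Finset.mem_inter, Finset.mem_erase] at hir
            exact ⟨hir.1.2, hir.2.2⟩
    · push_neg at hx
      obtain ⟨M, hM⟩ := zorn_subset
          {C : Set (Finset ι) | C ⊆ A ∧ ∀ a ∈ C, ∀ b ∈ C, a ≠ b → a ∩ b = ∅}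
          (by
            intro c hc hchain
            refine ⟨⋃₀ c, ⟨?_, ?_⟩, fun s hs => subset_sUnion_of_mem hs⟩
            · rintro a ⟨s, hs, has⟩
              exact (hc hs).1 has
            · rintro a ⟨s, hs, has⟩ b ⟨t, ht, hbt⟩ hne
              rcases hchain.total hs ht with hst | hts
              · exact (hc ht).2 a (hst has) b hbt hne
              · exact (hc hs).2 a has b (hts hbt) hne)
      by_cases hMcard : θ ≤ #M
      · exact ⟨∅, M, hM.prop.1, hMcard, hM.prop.2⟩
      · exfalso
        push_neg at hMcard
        have hX : #(⋃ b ∈ M, (↑b : Set ι)) < θ :=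
          biUnion_lt hreg hMcard (fun b _ => (b.finite_toSet.lt_aleph0).trans hθ)
        have hcover : A ⊆ ⋃ x ∈ ⋃ b ∈ M, (↑b : Set ι), {a ∈ A | x ∈ a} := by
          intro a ha
          have hane : a.Nonempty := by
            rw [← Finset.card_pos, hcard a ha]; exact Nat.succ_pos n
          by_cases haM : a ∈ M
          · obtain ⟨y, hya⟩ := hane
            exact mem_biUnion (mem_biUnion haM hya) ⟨ha, hya⟩
          · have hnotins : ¬ (insert a M ∈
                {C : Set (Finset ι) | C ⊆ A ∧ ∀ a ∈ C, ∀ b ∈ C, a ≠ b → a ∩ b = ∅}) := by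
              intro hins
              exact haM (hM.2 hins (subset_insert a M) (mem_insert a M))
            have hmeet : ∃ b ∈ M, b ≠ a ∧ (a ∩ b).Nonempty := by
              by_contra hno; push_neg at hno
              apply hnotins
              constructor
              · exact insert_subset ha hM.1.1
              · intro c hc d hd hne
                rcases Set.mem_insert_iff.1 hc with rfl | hcM
                · rcases Set.mem_insert_iff.1 hd with rfl | hdM
                  · exact absurd rfl hne
                  · have h4 := hno d hdM (fun h => hne h.symm)
                    exact h4
                · rcases Set.mem_insert_iff.1 hd with rfl | hdM
                  · have h4 := hno c hcM hne
                    rw [Finset.inter_comm]; exact h4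
                  · exact hM.1.2 c hcM d hdM hne
            obtain ⟨b, hbM, _, y, hy⟩ := hmeet
            exact mem_biUnion (mem_biUnion hbM (Finset.mem_inter.1 hy).2)
              ⟨ha, (Finset.mem_inter.1 hy).1⟩
        exact absurd (hA.trans (mk_le_mk_of_subset hcover))
          (not_le.2 (biUnion_lt hreg hX (fun y _ => hx y)))

lemma delta {ι : Type} {θ : Cardinal} (hreg : θ.IsRegular) (hθ : ℵ₀ < θ)
    (A : Set (Finset ι)) (hA : θ ≤ #A) :
    ∃ (r : Finset ι) (A' : Set (Finset ι)), A' ⊆ A ∧ θ ≤ #A' ∧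
      ∀ a ∈ A', ∀ b ∈ A', a ≠ b → a ∩ b = r := by
  have himg : #(Finset.card '' A) < θ := by
    have h1 : #(Finset.card '' A) ≤ ℵ₀ := by
      have h2 := mk_le_mk_of_subset (subset_univ (Finset.card '' A))
      rwa [mk_univ, mk_nat] at h2
    exact h1.trans_lt hθ
  obtain ⟨n, hn⟩ := exists_fiber hreg Finset.card himg hA
  obtain ⟨r, A', h1, h2, h3⟩ := delta_aux hreg hθ n (A ∩ Finset.card ⁻¹' {n})
    (fun a ha => ha.2) hn
  exact ⟨r, A', h1.trans inter_subset_left, h2, h3⟩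

end Stmt3Aux

open Stmt3Aux

/-- If `κ` is regular uncountable, `(W, w)` is a `(λ, κ)`-candidate and `B` realizes
`BA(W, w)`, then `B` satisfies the `κ⁺`-c.c.: every set of pairwise disjoint nonzero
elements has cardinality at most `κ`. -/
theorem stmt_3 (κ : Cardinal) (hreg : κ.IsRegular) (hκ : ℵ₀ < κ)
    (ι B : Type) [BooleanAlgebra B]
    (W : Set (Finset ι)) (w : Finset ι → Set (Set ι)) (hc : IsCandidateLt κ W w)
    (x : ι → B) (hr : RealizesBA W x) :
    ∀ S : Set B, (∀ a ∈ S, a ≠ ⊥) → (S.Pairwise fun a b => a ⊓ b = ⊥) → #S ≤ κ := by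
  classical
  intro S hS hpair
  by_contra hcon
  push_neg at hcon
  set θ := Order.succ κ with hθdef
  have hθreg : θ.IsRegular := Cardinal.isRegular_succ hreg.aleph0_le
  have hκθ : κ < θ := Order.lt_succ_of_not_isMax (not_isMax κ)
  have hθ0 : ℵ₀ < θ := hκ.trans hκθ
  have hθS : θ ≤ #S := Order.succ_le_of_lt hcon
  -- Step 1: pick a nonzero elementary product below each element of `S`
  have hex : ∀ a ∈ S, ∃ p : Finset ι × Finset ι, eP x p ≤ a ∧ eP x p ≠ ⊥ := by
    intro a ha
    have hmem : a ∈ NF x := subalgGen_subset_NF x (by rw [hr.1]; exact mem_univ a)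
    obtain ⟨F, rfl⟩ := hmem
    have hne : ∃ p ∈ F, eP x p ≠ ⊥ := by
      by_contra hcon2
      push_neg at hcon2
      exact hS _ ha ((Finset.sup_eq_bot_iff _ _).2 hcon2)
    obtain ⟨p, hpF, hp⟩ := hne
    exact ⟨p, Finset.le_sup hpF, hp⟩
  choose! P hP1 hP2 using hex
  have hPinj : InjOn P S := by
    intro a ha b hb hPe
    by_contra hne
    have h1 := hpair ha hb hne
    have h2 : eP x (P a) ≤ a ⊓ b := le_inf (hP1 a ha) (by rw [hPe]; exact hP1 b hb)
    rw [h1] at h2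
    exact hP2 a ha (le_bot_iff.1 h2)
  have h𝒫card : θ ≤ #(P '' S) := by rw [mk_image_eq_of_injOn _ _ hPinj]; exact hθS
  have h𝒫ne : ∀ p ∈ P '' S, eP x p ≠ ⊥ := by rintro p ⟨a, ha, rfl⟩; exact hP2 a ha
  have h𝒫disj : ∀ p ∈ P '' S, ∀ q ∈ P '' S, p ≠ q → eP x p ⊓ eP x q = ⊥ := by
    rintro p ⟨a, ha, rfl⟩ q ⟨b, hb, rfl⟩ hne
    have hab : a ≠ b := fun h => hne (by rw [h])
    have h2 : eP x (P a) ⊓ eP x (P b) ≤ a ⊓ b := inf_le_inf (hP1 a ha) (hP1 b hb)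
    rw [hpair ha hb hab] at h2
    exact le_bot_iff.1 h2
  -- Step 2: pass to an injective family indexed by the unions
  set un : Finset ι × Finset ι → Finset ι := fun p => p.1 ∪ p.2 with hundef
  have hfib : ∀ v, #((P '' S ∩ un ⁻¹' {v} : Set (Finset ι × Finset ι))) < θ := by
    intro v
    have hfin : (P '' S ∩ un ⁻¹' {v}).Finite := by
      apply Set.Finite.subset (Finset.finite_toSet (v.powerset ×ˢ v.powerset))
      rintro ⟨p1, p2⟩ ⟨_, hp2⟩
      have hp2' : p1 ∪ p2 = v := hp2
      simp only [Finset.coe_product, Set.mem_prod, Finset.mem_coe, Finset.mem_powerset]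
      constructor
      · rw [← hp2']; exact Finset.subset_union_left
      · rw [← hp2']; exact Finset.subset_union_right
    exact hfin.lt_aleph0.trans hθ0
  have himg : θ ≤ #(un '' (P '' S)) := by
    by_contra h2
    push_neg at h2
    exact absurd (fiber_lemma hθreg un h2 hfib) (not_lt.2 h𝒫card)
  have hsec : ∀ v ∈ un '' (P '' S), ∃ p, p ∈ P '' S ∧ un p = v := fun v hv => hv
  choose! g hg𝒫 hgun using hsec
  -- Step 3: Δ-system
  obtain ⟨r, V₁, hV₁sub, hV₁card, hroot⟩ := delta hθreg hθ0 (un '' (P '' S)) himg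
  -- Step 4: stabilize the positive trace on the root
  have hm : #((fun v => (g v).1 ∩ r) '' V₁) < θ := by
    have hsub1 : ((fun v => (g v).1 ∩ r) '' V₁) ⊆ ↑r.powerset := by
      rintro s ⟨v, _, rfl⟩
      simp only [Finset.mem_coe, Finset.mem_powerset]
      exact Finset.inter_subset_right
    exact ((Finset.finite_toSet _).subset hsub1).lt_aleph0.trans hθ0
  obtain ⟨rp, hrp⟩ := exists_fiber hθreg _ hm hV₁card
  set V₂ := V₁ ∩ (fun v => (g v).1 ∩ r) ⁻¹' {rp} with hV₂def
  set V₃ := V₂ \ {r} with hV₃def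
  have hV₃card : θ ≤ #V₃ := by
    by_contra h2
    push_neg at h2
    have h3 : #V₂ ≤ #V₃ + 1 := by
      have hsub2 : V₂ ⊆ V₃ ∪ {r} := by
        intro v hv
        rcases eq_or_ne v r with rfl | hvr
        · exact Set.mem_union_right _ rfl
        · exact Set.mem_union_left _ ⟨hv, hvr⟩
      exact (mk_le_mk_of_subset hsub2).trans ((mk_union_le _ _).trans (by rw [mk_singleton]))
    exact absurd hrp (not_le.2 (h3.trans_lt
      (add_lt_of_lt hθreg.aleph0_le h2 (one_lt_aleph0.trans hθ0))))
  have hV₃V₁ : V₃ ⊆ V₁ := fun v hv => hv.1.1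
  have hrsub : ∀ v ∈ V₁, r ⊆ v := by
    intro v hv
    have h2 : ∃ v' ∈ V₁, v' ≠ v := by
      by_contra h3
      push_neg at h3
      have h4 : V₁ ⊆ {v} := fun v' hv' => h3 v' hv'
      exact absurd (hV₁card.trans ((mk_le_mk_of_subset h4).trans (le_of_eq (mk_singleton _))))
        (not_le.2 (one_lt_aleph0.trans hθ0))
    obtain ⟨v', hv', hne⟩ := h2
    rw [← hroot v' hv' v hv hne]
    exact Finset.inter_subset_right
  have hgmem : ∀ v ∈ V₁, g v ∈ P '' S := fun v hv => hg𝒫 v (hV₁sub hv)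
  have hgun' : ∀ v ∈ V₁, (g v).1 ∪ (g v).2 = v := fun v hv => hgun v (hV₁sub hv)
  have hgrp : ∀ v ∈ V₂, (g v).1 ∩ r = rp := fun v hv => hv.2
  have hginj : ∀ v ∈ V₁, ∀ v' ∈ V₁, v ≠ v' → g v ≠ g v' := by
    intro v hv v' hv' hne hg
    apply hne
    rw [← hgun' v hv, ← hgun' v' hv', hg]
  have hfacts : ∀ v ∈ V₁, (g v).1 ∩ (g v).2 = ∅ ∧ ∀ u ∈ W, ¬ u ⊆ (g v).1 :=
    fun v hv => eP_ne_bot_facts hr (g v) (h𝒫ne _ (hgmem v hv))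
  -- Step 5: witnesses from W for pairs
  have hU : ∀ v ∈ V₃, ∀ v' ∈ V₃, v ≠ v' → ∃ u, u ∈ W ∧ u ⊆ (g v).1 ∪ (g v').1 := by
    intro v hv v' hv' hne
    by_contra hno
    push_neg at hno
    have hdisj : ((g v).1 ∪ (g v').1) ∩ ((g v).2 ∪ (g v').2) = ∅ := by
      rw [Finset.eq_empty_iff_forall_notMem]
      intro i hi
      rw [Finset.mem_inter, Finset.mem_union, Finset.mem_union] at hi
      obtain ⟨hi1, hi2⟩ := hi
      have key : ∀ a ∈ V₃, ∀ b ∈ V₃, i ∈ (g a).1 → i ∈ (g b).2 → False := by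
        intro a ha b hb hia hib
        rcases eq_or_ne a b with rfl | hab
        · exact Finset.eq_empty_iff_forall_notMem.1 (hfacts a (hV₃V₁ ha)).1 i
            (Finset.mem_inter.2 ⟨hia, hib⟩)
        · have hir : i ∈ r := by
            rw [← hroot a (hV₃V₁ ha) b (hV₃V₁ hb) hab]
            refine Finset.mem_inter.2 ⟨?_, ?_⟩
            · rw [← hgun' a (hV₃V₁ ha)]; exact Finset.mem_union_left _ hia
            · rw [← hgun' b (hV₃V₁ hb)]; exact Finset.mem_union_right _ hib
          have hirp : i ∈ rp := by
            rw [← hgrp a ha.1]; exact Finset.mem_inter.2 ⟨hia, hir⟩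
          have hib1 : i ∈ (g b).1 := by
            have h5 : i ∈ (g b).1 ∩ r := by rw [hgrp b hb.1]; exact hirp
            exact (Finset.mem_inter.1 h5).1
          exact Finset.eq_empty_iff_forall_notMem.1 (hfacts b (hV₃V₁ hb)).1 i
            (Finset.mem_inter.2 ⟨hib1, hib⟩)
      rcases hi1 with h1 | h1 <;> rcases hi2 with h2 | h2
      · exact key v hv v hv h1 h2
      · exact key v hv v' hv' h1 h2
      · exact key v' hv' v hv h1 h2
      · exact key v' hv' v' hv' h1 h2
    exact pair_lemma hr (g v).1 (g v).2 (g v').1 (g v').2 hdisj hno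
      (h𝒫disj _ (hgmem v (hV₃V₁ hv)) _ (hgmem v' (hV₃V₁ hv'))
        (hginj v (hV₃V₁ hv) v' (hV₃V₁ hv') hne))
  choose! uu huW husub using hU
  -- Step 6: witnesses meet both petals
  have hmeet : ∀ v ∈ V₃, ∀ v' ∈ V₃, ∀ _ : v ≠ v', ∃ i ∈ uu v v', i ∈ v' \ r := by
    intro v hv v' hv' hne
    obtain ⟨i, hiu, hia⟩ := Finset.not_subset.1 ((hfacts v (hV₃V₁ hv)).2 _ (huW v hv v' hv' hne))
    have hia' : i ∈ (g v').1 := by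
      have h5 := husub v hv v' hv' hne hiu
      rw [Finset.mem_union] at h5
      tauto
    have hir : i ∉ r := by
      intro hir
      apply hia
      have h2 : i ∈ rp := by rw [← hgrp v' hv'.1]; exact Finset.mem_inter.2 ⟨hia', hir⟩
      have h3 : i ∈ (g v).1 ∩ r := by rw [hgrp v hv.1]; exact h2
      exact (Finset.mem_inter.1 h3).1
    refine ⟨i, hiu, Finset.mem_sdiff.2 ⟨?_, hir⟩⟩
    rw [← hgun' v' (hV₃V₁ hv')]
    exact Finset.mem_union_left _ hia'
  have hmeet' : ∀ v ∈ V₃, ∀ v' ∈ V₃, ∀ _ : v ≠ v', ∃ i ∈ uu v v', i ∈ v \ r := by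
    intro v hv v' hv' hne
    obtain ⟨i, hiu, hia⟩ := Finset.not_subset.1 ((hfacts v' (hV₃V₁ hv')).2 _ (huW v hv v' hv' hne))
    have hia' : i ∈ (g v).1 := by
      have h5 := husub v hv v' hv' hne hiu
      rw [Finset.mem_union] at h5
      tauto
    have hir : i ∉ r := by
      intro hir
      apply hia
      have h2 : i ∈ rp := by rw [← hgrp v hv.1]; exact Finset.mem_inter.2 ⟨hia', hir⟩
      have h3 : i ∈ (g v').1 ∩ r := by rw [hgrp v' hv'.1]; exact h2
      exact (Finset.mem_inter.1 h3).1
    refine ⟨i, hiu, Finset.mem_sdiff.2 ⟨?_, hir⟩⟩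
    rw [← hgun' v (hV₃V₁ hv)]
    exact Finset.mem_union_left _ hia'
  -- Step 7: the small sets D and E
  set D : Finset ι → Set (Finset ι) :=
    fun v => {u | u ∈ W ∧ ((↑u ∩ ↑(v \ r) : Set ι) ∈ w u ∨ (↑u ∩ ↑v : Set ι) ∈ w u)} with hDdef
  have hDcard : ∀ v, #(D v) < κ := by
    intro v
    have hsub2 : D v ⊆ {u ∈ W | (↑u ∩ ↑(v \ r) : Set ι) ∈ w u} ∪
        {u ∈ W | (↑u ∩ ↑v : Set ι) ∈ w u} := by
      rintro u ⟨h1, h2 | h2⟩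
      · exact Set.mem_union_left _ ⟨h1, h2⟩
      · exact Set.mem_union_right _ ⟨h1, h2⟩
    exact (mk_le_mk_of_subset hsub2).trans_lt ((mk_union_le _ _).trans_lt
      (add_lt_of_lt hreg.aleph0_le (hc.2 _) (hc.2 _)))
  have hDmem : ∀ v ∈ V₃, ∀ v' ∈ V₃, ∀ _ : v ≠ v', uu v v' ∈ D v ∪ D v' := by
    intro v hv v' hv' hne
    have huW' := huW v hv v' hv' hne
    obtain ⟨hwsub, hwtop, hwup, hwpart⟩ := hc.1 _ huW'
    rcases hwpart ((↑(uu v v') : Set ι) ∩ (↑(g v).1 \ ↑r)) Set.inter_subset_left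
      with hcase | hcase
    · refine Set.mem_union_left _ ⟨huW', Or.inl (hwup _ _ hcase ?_ Set.inter_subset_left)⟩
      intro i hi
      obtain ⟨hi1, hi2, hi3⟩ := hi
      refine ⟨hi1, ?_⟩
      rw [Finset.coe_sdiff]
      refine ⟨?_, hi3⟩
      rw [Finset.mem_coe, ← hgun' v (hV₃V₁ hv)]
      exact Finset.mem_union_left _ hi2
    · refine Set.mem_union_right _ ⟨huW', Or.inr (hwup _ _ hcase ?_ Set.inter_subset_left)⟩
      intro i hi
      obtain ⟨hi1, hi2⟩ := hi
      refine ⟨hi1, ?_⟩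
      rw [Finset.mem_coe]
      by_cases hir : i ∈ r
      · exact hrsub v' (hV₃V₁ hv') hir
      · have hiu : i ∈ (g v).1 ∪ (g v').1 := husub v hv v' hv' hne hi1
        rcases Finset.mem_union.1 hiu with h1 | h1
        · exact absurd ⟨hi1, h1, hir⟩ hi2
        · rw [← hgun' v' (hV₃V₁ hv')]
          exact Finset.mem_union_left _ h1
  set E : Finset ι → Set (Finset ι) :=
    fun v => {v' | v' ∈ V₃ ∧ ∃ u ∈ D v, ∃ i ∈ u, i ∈ v' \ r} with hEdef
  have hEcard : ∀ v, #(E v) < κ := by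
    intro v
    have hex2 : ∀ v' ∈ E v, ∃ q : Finset ι × ι, q.1 ∈ D v ∧ q.2 ∈ q.1 ∧ q.2 ∈ v' \ r := by
      rintro v' ⟨hv', u, hu, i, hi, hir⟩
      exact ⟨(u, i), hu, hi, hir⟩
    choose e he1 he2 he3 using hex2
    have hpieces : ∀ u ∈ D v, #({q : Finset ι × ι | q.1 = u ∧ q.2 ∈ u}) < κ := by
      intro u _
      have hfin2 : {q : Finset ι × ι | q.1 = u ∧ q.2 ∈ u}.Finite := by
        apply Set.Finite.subset (Set.Finite.image (fun i => (u, i)) u.finite_toSet)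
        rintro ⟨q1, q2⟩ ⟨rfl, h2⟩
        exact ⟨q2, h2, rfl⟩
      exact hfin2.lt_aleph0.trans hκ
    have hF : ∀ z : ↥(E v), e z.1 z.2 ∈ ⋃ u ∈ D v, {q : Finset ι × ι | q.1 = u ∧ q.2 ∈ u} :=
      fun z => mem_biUnion (he1 z.1 z.2) ⟨rfl, he2 z.1 z.2⟩
    have hinj2 : Function.Injective
        (fun z : ↥(E v) => (⟨e z.1 z.2, hF z⟩ : ↥(⋃ u ∈ D v,
          {q : Finset ι × ι | q.1 = u ∧ q.2 ∈ u}))) := by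
      intro z1 z2 heq
      simp only [Subtype.mk.injEq] at heq
      apply Subtype.ext
      by_contra hne
      have h12 : z1.1 ∩ z2.1 = r := hroot _ (hV₃V₁ z1.2.1) _ (hV₃V₁ z2.2.1) hne
      have ha := he3 z1.1 z1.2
      have hb := he3 z2.1 z2.2
      rw [heq] at ha
      have h5 : (e z2.1 z2.2).2 ∈ z1.1 ∩ z2.1 :=
        Finset.mem_inter.2 ⟨(Finset.mem_sdiff.1 ha).1, (Finset.mem_sdiff.1 hb).1⟩
      rw [h12] at h5
      exact (Finset.mem_sdiff.1 ha).2 h5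
    exact (mk_le_of_injective hinj2).trans_lt (biUnion_lt hreg (hDcard v) hpieces)
  -- Step 8: final counting contradiction
  have hκV₃ : κ ≤ #V₃ := (le_of_lt hκθ).trans hV₃card
  obtain ⟨T, hTsub, hTcard⟩ := le_mk_iff_exists_subset.1 hκV₃
  have hBad : #((T ∪ ⋃ v' ∈ T, E v' : Set (Finset ι))) < θ := by
    apply (mk_union_le _ _).trans_lt
    apply add_lt_of_lt hθreg.aleph0_le
    · rw [hTcard]; exact hκθ
    · exact biUnion_lt hθreg (by rw [hTcard]; exact hκθ) (fun v' _ => (hEcard v').trans hκθ)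
  have hno : ¬ V₃ ⊆ T ∪ ⋃ v' ∈ T, E v' := by
    intro hsub2
    exact absurd (hV₃card.trans (mk_le_mk_of_subset hsub2)) (not_le.2 hBad)
  obtain ⟨α, hα3, hαB⟩ := not_subset.1 hno
  have hTE : T ⊆ E α := by
    intro β hβ
    have hβ3 : β ∈ V₃ := hTsub hβ
    have hne : α ≠ β := by
      rintro rfl
      exact hαB (Set.mem_union_left _ hβ)
    rcases hDmem α hα3 β hβ3 hne with hDα | hDβ
    · obtain ⟨i, hi, hir⟩ := hmeet α hα3 β hβ3 hne
      exact ⟨hβ3, uu α β, hDα, i, hi, hir⟩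
    · obtain ⟨i, hi, hir⟩ := hmeet' α hα3 β hβ3 hne
      exact absurd (Set.mem_union_right _ (mem_biUnion hβ (⟨hα3, uu α β, hDβ, i, hi, hir⟩ : α ∈ E β))) hαB
  have hfinal : κ ≤ #(E α) := by rw [← hTcard]; exact mk_le_mk_of_subset hTE
  exact absurd hfinal (not_le.2 (hEcard α))
end

section
/- Let (W, w) be a λ-candidate and let B with elements x_i (i < λ) realize BA(W, w). Let u ⊆ λ be arbitrary, put W^{[u]} = W ∩ P(u) and w^{[u]} = w restricted to W^{[u]}, and let B' be the Boolean subalgebra of B generated by {x_i : i ∈ u}. Then (W^{[u]}, w^{[u]}) is a λ-candidate, and B' with the elements x_i (i ∈ u) realizes BA(W^{[u]}, w^{[u]}); in particular, BA(W^{[u]}, w^{[u]}) embeds into BA(W, w) over the generators. -/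
open Cardinal Set

/-- `h` is a homomorphism into the two-element algebra when restricted to the subset
`B'` of `B`. -/
def IsHomOn {B : Type*} [BooleanAlgebra B] (B' : Set B) (h : B → Bool) : Prop :=
  h ⊥ = false ∧ h ⊤ = true ∧ (∀ a ∈ B', h aᶜ = !h a) ∧
  (∀ a ∈ B', ∀ b ∈ B', h (a ⊓ b) = (h a && h b)) ∧
  ∀ a ∈ B', ∀ b ∈ B', h (a ⊔ b) = (h a || h b)

/-- Restriction of a realized candidate: for `u ⊆ λ`, the pair `(W ∩ 𝒫(u), w)` is a
candidate, the defining relations of `BA(W^[u], w^[u])` hold, and every admissible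
`f` extends to a homomorphism on the subalgebra generated by `{x i : i ∈ u}`; i.e. that
subalgebra together with the `x i` (`i ∈ u`) realizes `BA(W^[u], w^[u])`, which thus
embeds into `BA(W, w)` over the generators. -/
theorem stmt_10 (ι B : Type) [BooleanAlgebra B]
    (W : Set (Finset ι)) (w : Finset ι → Set (Set ι)) (hc : IsCandidate W w)
    (x : ι → B) (hr : RealizesBA W x) (u : Set ι) :
    IsCandidate {v ∈ W | ↑v ⊆ u} w ∧
    (∀ v ∈ W, ↑v ⊆ u → v.inf x = ⊥) ∧
    ∀ f : ι → Bool, (∀ v ∈ W, ↑v ⊆ u → ∃ i ∈ v, f i = false) →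
      ∃ h : B → Bool, IsHomOn (SubalgGen (x '' u)) h ∧ ∀ i ∈ u, h (x i) = f i := by
  classical
  obtain ⟨hpfil, hfin⟩ := hc
  obtain ⟨hgen, hinf, hhom⟩ := hr
  refine ⟨⟨fun v hv => hpfil v hv.1, fun v => (hfin v).subset fun a ha => ⟨ha.1.1, ha.2⟩⟩,
    fun v hv _ => hinf v hv, fun f hf => ?_⟩
  set f' : ι → Bool := fun i => if i ∈ u then f i else false with hf'
  have hadm : ∀ v ∈ W, ∃ i ∈ v, f' i = false := by
    intro v hv
    by_cases hvu : (↑v : Set ι) ⊆ u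
    · obtain ⟨i, hi, hfi⟩ := hf v hv hvu
      exact ⟨i, hi, by simp [hf', hvu hi, hfi]⟩
    · obtain ⟨i, hi, hiu⟩ := not_subset.mp hvu
      exact ⟨i, hi, by simp [hf', hiu]⟩
  obtain ⟨h, ⟨h1, h2, h3, h4, h5⟩, hx⟩ := hhom f' hadm
  exact ⟨h, ⟨h1, h2, fun a _ => h3 a, fun a _ b _ => h4 a b, fun a _ b _ => h5 a b⟩,
    fun i hi => by simpa [hf', hi] using hx i⟩
end

section
/- Let (W, w) be a nontrivial λ-candidate, let u ⊆ λ be (W, w)-closed, let B with elements x_i (i < λ) realize BA(W, w), and let B' be the Boolean subalgebra of B generated by {x_i : i ∈ u}. Then B' is a regular (dense-complete) subalgebra of B: for every nonzero z ∈ B there is a nonzero y ∈ B' such that every nonzero y' ∈ B' with y' ≤ y satisfies y' ⊓ z ≠ 0. -/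
open Cardinal Set

/-- `u ⊆ ι` is `(W, w)`-closed: for every `v ∈ W` with `v ∩ u ∈ w v` we have `v ⊆ u`. -/
def WWClosed {ι : Type*} (W : Set (Finset ι)) (w : Finset ι → Set (Set ι)) (u : Set ι) : Prop :=
  ∀ v ∈ W, (↑v ∩ u : Set ι) ∈ w v → ↑v ⊆ u

/-- The candidate `(W, w)` is nontrivial: for every `v ∈ W` and `i ∈ v`, the set
`v \ {i}` belongs to `w v`. -/
def NontrivialCand {ι : Type*} (W : Set (Finset ι)) (w : Finset ι → Set (Set ι)) : Prop :=
  ∀ v ∈ W, ∀ i ∈ v, (↑v \ {i} : Set ι) ∈ w v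

section Aux

variable {B : Type*} [BooleanAlgebra B]

lemma mem_subalgGen {X : Set B} {b : B} (hb : b ∈ X) : b ∈ SubalgGen X :=
  Set.mem_sInter.2 fun _ hS => hS.1 hb

lemma subalgGen_subset {X S : Set B} (h1 : X ⊆ S) (h2 : ⊥ ∈ S) (h3 : ⊤ ∈ S)
    (h4 : ∀ a ∈ S, aᶜ ∈ S) (h5 : ∀ a ∈ S, ∀ b ∈ S, a ⊓ b ∈ S)
    (h6 : ∀ a ∈ S, ∀ b ∈ S, a ⊔ b ∈ S) : SubalgGen X ⊆ S :=
  fun _ hz => Set.mem_sInter.1 hz S ⟨h1, h2, h3, h4, h5, h6⟩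

lemma bot_mem_subalgGen (X : Set B) : (⊥ : B) ∈ SubalgGen X :=
  Set.mem_sInter.2 fun _ hS => hS.2.1

lemma top_mem_subalgGen (X : Set B) : (⊤ : B) ∈ SubalgGen X :=
  Set.mem_sInter.2 fun _ hS => hS.2.2.1

lemma compl_mem_subalgGen {X : Set B} {a : B} (ha : a ∈ SubalgGen X) : aᶜ ∈ SubalgGen X :=
  Set.mem_sInter.2 fun S hS => hS.2.2.2.1 a (Set.mem_sInter.1 ha S hS)

lemma inf_mem_subalgGen {X : Set B} {a b : B} (ha : a ∈ SubalgGen X) (hb : b ∈ SubalgGen X) :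
    a ⊓ b ∈ SubalgGen X :=
  Set.mem_sInter.2 fun S hS =>
    hS.2.2.2.2.1 a (Set.mem_sInter.1 ha S hS) b (Set.mem_sInter.1 hb S hS)

lemma sup_mem_subalgGen {X : Set B} {a b : B} (ha : a ∈ SubalgGen X) (hb : b ∈ SubalgGen X) :
    a ⊔ b ∈ SubalgGen X :=
  Set.mem_sInter.2 fun S hS =>
    hS.2.2.2.2.2 a (Set.mem_sInter.1 ha S hS) b (Set.mem_sInter.1 hb S hS)

lemma subalgGen_mono {X Y : Set B} (h : X ⊆ Y) : SubalgGen X ⊆ SubalgGen Y :=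
  subalgGen_subset (fun _ hb => mem_subalgGen (h hb)) (bot_mem_subalgGen Y)
    (top_mem_subalgGen Y) (fun _ ha => compl_mem_subalgGen ha)
    (fun _ ha _ hb => inf_mem_subalgGen ha hb) (fun _ ha _ hb => sup_mem_subalgGen ha hb)

lemma finsetInf_mem_subalgGen {β : Type*} {X : Set B} (s : Finset β) (g : β → B)
    (hg : ∀ i ∈ s, g i ∈ SubalgGen X) : s.inf g ∈ SubalgGen X := by
  induction s using Finset.cons_induction with
  | empty => simpa using top_mem_subalgGen X
  | cons i s hi ih =>
    rw [Finset.inf_cons]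
    exact inf_mem_subalgGen (hg i (Finset.mem_cons_self i s))
      (ih fun j hj => hg j (Finset.mem_cons.2 (Or.inr hj)))

lemma IsBoolHom.le_true {h : B → Bool} (hh : IsBoolHom h) {a b : B} (hab : a ≤ b)
    (ha : h a = true) : h b = true := by
  have h2 := hh.2.2.2.1 a b
  rw [inf_eq_left.2 hab, ha] at h2
  simpa using h2.symm

lemma IsBoolHom.finsetInf {β : Type*} {h : B → Bool} (hh : IsBoolHom h) (s : Finset β)
    (g : β → B) : h (s.inf g) = true ↔ ∀ i ∈ s, h (g i) = true := by
  induction s using Finset.cons_induction with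
  | empty => simp [hh.2.1]
  | cons i s hi ih =>
    rw [Finset.inf_cons, hh.2.2.2.1, Bool.and_eq_true, ih]
    simp

lemma boolHom_eq_on_subalgGen {g h : B → Bool} (hg : IsBoolHom g) (hh : IsBoolHom h)
    {X : Set B} (hX : ∀ b ∈ X, g b = h b) : ∀ b ∈ SubalgGen X, g b = h b := by
  intro b hb
  refine subalgGen_subset (S := {b | g b = h b}) hX ?_ ?_ ?_ ?_ ?_ hb
  · exact hg.1.trans hh.1.symm
  · exact hg.2.1.trans hh.2.1.symm
  · intro a ha; simp only [Set.mem_setOf_eq] at *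
    rw [hg.2.2.1, hh.2.2.1, ha]
  · intro a ha b hb; simp only [Set.mem_setOf_eq] at *
    rw [hg.2.2.2.1, hh.2.2.2.1, ha, hb]
  · intro a ha b hb; simp only [Set.mem_setOf_eq] at *
    rw [hg.2.2.2.2, hh.2.2.2.2, ha, hb]

lemma exists_boolHom_of_ne_bot {z : B} (hz : z ≠ ⊥) :
    ∃ h : B → Bool, IsBoolHom h ∧ h z = true := by
  classical
  have hdisj : Disjoint ((Order.PFilter.principal z : Order.PFilter B) : Set B)
      ((Order.Ideal.principal (⊥ : B) : Order.Ideal B) : Set B) := by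
    rw [Set.disjoint_left]
    intro a haF haI
    have h1 : z ≤ a := (Order.PFilter.mem_principal).1 haF
    have h2 : a ≤ ⊥ := (Order.Ideal.mem_principal).1 haI
    exact hz (le_bot_iff.1 (h1.trans h2))
  obtain ⟨J, hJ, _, hJF⟩ := DistribLattice.prime_ideal_of_disjoint_filter_ideal hdisj
  have hJp : Order.Ideal.IsProper J := hJ.toIsProper
  have hzJ : z ∉ J := Set.disjoint_left.1 hJF (Order.PFilter.mem_principal.2 le_rfl)
  refine ⟨fun b => if b ∈ J then false else true, ⟨?_, ?_, ?_, ?_, ?_⟩, ?_⟩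
  · simp [J.bot_mem]
  · simp [hJp.top_notMem]
  · intro a
    by_cases ha : a ∈ J
    · have : aᶜ ∉ J := by
        intro hc
        exact hJp.top_notMem (by simpa using J.sup_mem ha hc)
      simp [ha, this]
    · have : aᶜ ∈ J := hJ.compl_mem_of_notMem ha
      simp [ha, this]
  · intro a b
    by_cases ha : a ∈ J
    · have : a ⊓ b ∈ J := J.lower inf_le_left ha
      simp [ha, this]
    · by_cases hb : b ∈ J
      · have : a ⊓ b ∈ J := J.lower inf_le_right hb
        simp [hb, this]
      · have : a ⊓ b ∉ J := fun hab => (hJ.mem_or_mem hab).elim ha hb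
        simp [ha, hb, this]
  · intro a b
    by_cases ha : a ∈ J
    · by_cases hb : b ∈ J
      · have : a ⊔ b ∈ J := J.sup_mem ha hb
        simp [ha, hb, this]
      · have : a ⊔ b ∉ J := fun hab => hb (J.lower le_sup_right hab)
        simp [ha, hb, this]
    · have : a ⊔ b ∉ J := fun hab => ha (J.lower le_sup_left hab)
      simp [ha, this]
  · simp [hzJ]

lemma subalgGen_image_finite_support {ι : Type*} (x : ι → B) (u : Set ι) :
    ∀ z ∈ SubalgGen (x '' u), ∃ v : Finset ι, ↑v ⊆ u ∧ z ∈ SubalgGen (x '' ↑v) := by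
  classical
  refine subalgGen_subset (S := {z | ∃ v : Finset ι, ↑v ⊆ u ∧ z ∈ SubalgGen (x '' ↑v)})
    ?_ ?_ ?_ ?_ ?_ ?_
  · rintro b ⟨i, hi, rfl⟩
    exact ⟨{i}, by simpa using hi, mem_subalgGen ⟨i, by simp⟩⟩
  · exact ⟨∅, by simp, bot_mem_subalgGen _⟩
  · exact ⟨∅, by simp, top_mem_subalgGen _⟩
  · rintro a ⟨v, hv, ha⟩
    exact ⟨v, hv, compl_mem_subalgGen ha⟩
  · rintro a ⟨v, hv, ha⟩ b ⟨v', hv', hb⟩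
    refine ⟨v ∪ v', by simp [hv, hv', Set.union_subset], inf_mem_subalgGen
      (subalgGen_mono (Set.image_mono (f := x) (by simp [Finset.coe_union])) ha)
      (subalgGen_mono (Set.image_mono (f := x) (by simp [Finset.coe_union])) hb)⟩
  · rintro a ⟨v, hv, ha⟩ b ⟨v', hv', hb⟩
    refine ⟨v ∪ v', by simp [hv, hv', Set.union_subset], sup_mem_subalgGen
      (subalgGen_mono (Set.image_mono (f := x) (by simp [Finset.coe_union])) ha)
      (subalgGen_mono (Set.image_mono (f := x) (by simp [Finset.coe_union])) hb)⟩

/-- the minterm determined by a hom is nonbot and below z -/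
lemma minterm_le {ι : Type*} (x : ι → B) (v : Finset ι) (z : B)
    (hzv : z ∈ SubalgGen (x '' ↑v)) (h : B → Bool) (hh : IsBoolHom h) (hzt : h z = true)
    [DecidablePred fun i => h (x i) = true] :
    (v.filter (fun i => h (x i) = true)).inf x ⊓
      (v.filter (fun i => ¬ h (x i) = true)).inf (fun i => (x i)ᶜ) ≠ ⊥ ∧
    (v.filter (fun i => h (x i) = true)).inf x ⊓
      (v.filter (fun i => ¬ h (x i) = true)).inf (fun i => (x i)ᶜ) ≤ z := by
  classical
  set t := (v.filter (fun i => h (x i) = true)).inf x ⊓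
      (v.filter (fun i => ¬ h (x i) = true)).inf (fun i => (x i)ᶜ) with htdef
  have hht : h t = true := by
    rw [htdef, hh.2.2.2.1, Bool.and_eq_true]
    constructor
    · rw [hh.finsetInf]
      intro i hi
      exact (Finset.mem_filter.1 hi).2
    · rw [hh.finsetInf]
      intro i hi
      rw [hh.2.2.1]
      have := (Finset.mem_filter.1 hi).2
      simp only [Bool.not_eq_true] at this ⊢
      simp [this]
  have htne : t ≠ ⊥ := fun hb => by rw [hb, hh.1] at hht; exact Bool.false_ne_true hht
  refine ⟨htne, ?_⟩
  by_contra hle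
  have hsd : t ⊓ zᶜ ≠ ⊥ := by
    intro hb
    exact hle (sdiff_eq_bot_iff.1 (by rwa [_root_.sdiff_eq]))
  obtain ⟨g, hg, hgt⟩ := exists_boolHom_of_ne_bot hsd
  rw [hg.2.2.2.1, Bool.and_eq_true] at hgt
  have hgz : g z = false := by
    have := hg.2.2.1 z
    rw [hgt.2] at this
    exact Bool.not_eq_true' .. ▸ (by simpa using this.symm)
  have hagree : ∀ b ∈ x '' (↑v : Set ι), g b = h b := by
    rintro b ⟨i, hi, rfl⟩
    by_cases hxi : h (x i) = true
    · have hle1 : t ≤ x i := le_trans inf_le_left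
        (Finset.inf_le (Finset.mem_filter.2 ⟨Finset.mem_coe.1 hi, hxi⟩))
      rw [hxi, hg.le_true hle1 hgt.1]
    · have hle1 : t ≤ (x i)ᶜ := le_trans inf_le_right
        (Finset.inf_le (Finset.mem_filter.2 ⟨Finset.mem_coe.1 hi, hxi⟩))
      have : g (x i)ᶜ = true := hg.le_true hle1 hgt.1
      rw [hg.2.2.1] at this
      simp only [Bool.not_eq_true] at hxi
      rw [hxi]
      simpa using this
  have := boolHom_eq_on_subalgGen hg hh hagree z hzv
  rw [hgz, hzt] at this
  exact Bool.false_ne_true this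

end Aux

/-- If `(W, w)` is a nontrivial candidate, `u` is `(W, w)`-closed and `B` realizes
`BA(W, w)`, then the subalgebra `B'` generated by `{x i : i ∈ u}` is a regular
(dense-complete) subalgebra of `B`: every nonzero `z ∈ B` admits a nonzero `y ∈ B'`
all of whose nonzero `B'`-minorants meet `z`. -/
theorem stmt_11 (ι B : Type) [BooleanAlgebra B]
    (W : Set (Finset ι)) (w : Finset ι → Set (Set ι)) (hc : IsCandidate W w)
    (hnt : NontrivialCand W w) (u : Set ι) (hu : WWClosed W w u)
    (x : ι → B) (hr : RealizesBA W x) :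
    ∀ z : B, z ≠ ⊥ → ∃ y ∈ SubalgGen (x '' u), y ≠ ⊥ ∧
      ∀ y' ∈ SubalgGen (x '' u), y' ≠ ⊥ → y' ≤ y → y' ⊓ z ≠ ⊥ := by
  classical
  obtain ⟨hgen, hWinf, hext⟩ := hr
  intro z hz
  obtain ⟨h, hh, hhz⟩ := exists_boolHom_of_ne_bot hz
  have hzmem : z ∈ SubalgGen (x '' (Set.univ : Set ι)) := by
    rw [Set.image_univ, hgen]; trivial
  obtain ⟨v, -, hzv⟩ := subalgGen_image_finite_support x Set.univ z hzmem
  obtain ⟨htne, htz⟩ := minterm_le x v z hzv h hh hhz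
  set v₁ : Finset ι := v.filter (fun i => h (x i) = true) with hv₁def
  set v₀ : Finset ι := v.filter (fun i => ¬ h (x i) = true) with hv₀def
  set t : B := v₁.inf x ⊓ v₀.inf (fun i => (x i)ᶜ) with htdef
  -- Key fact: no member of W is contained in v₁
  have hK : ∀ u'' ∈ W, ¬ ((↑u'' : Set ι) ⊆ (↑v₁ : Set ι)) := by
    intro u'' hu'' hsub
    apply htne
    have h1 : t ≤ u''.inf x :=
      le_trans inf_le_left (Finset.inf_mono (Finset.coe_subset.1 hsub))
    rw [hWinf u'' hu''] at h1
    exact le_bot_iff.1 h1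
  set A : Finset ι → Finset ι := fun u' => u'.filter (fun i => i ∈ u ∧ i ∉ v₁) with hAdef
  set Vs : Finset (Finset ι) := (hc.2 v₁).toFinset.filter (fun u' => (A u').Nonempty) with hVsdef
  set y : B := (v₁.filter (fun i => i ∈ u)).inf x
      ⊓ (v₀.filter (fun i => i ∈ u)).inf (fun i => (x i)ᶜ)
      ⊓ Vs.inf (fun u' => ((A u').inf x)ᶜ) with hydef
  have hxmem : ∀ i ∈ u, x i ∈ SubalgGen (x '' u) := fun i hi => mem_subalgGen ⟨i, hi, rfl⟩
  have hymem : y ∈ SubalgGen (x '' u) := by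
    refine inf_mem_subalgGen (inf_mem_subalgGen ?_ ?_) ?_
    · exact finsetInf_mem_subalgGen _ _ (fun i hi => hxmem i (Finset.mem_filter.1 hi).2)
    · exact finsetInf_mem_subalgGen _ _
        (fun i hi => compl_mem_subalgGen (hxmem i (Finset.mem_filter.1 hi).2))
    · refine finsetInf_mem_subalgGen _ _ (fun u' hu' => compl_mem_subalgGen ?_)
      exact finsetInf_mem_subalgGen _ _
        (fun i hi => hxmem i (Finset.mem_filter.1 hi).2.1)
  have hyne : y ≠ ⊥ := by
    obtain ⟨h₀, hh₀, hf₀⟩ := hext (fun i => decide (i ∈ v₁ ∧ i ∈ u)) (by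
      intro u'' hu''
      obtain ⟨i, hi, hnv⟩ := Set.not_subset.1 (hK u'' hu'')
      refine ⟨i, Finset.mem_coe.1 hi, ?_⟩
      simp only [decide_eq_false_iff_not]
      intro hcon
      exact hnv (Finset.mem_coe.2 hcon.1))
    intro hyb
    have hy0 : h₀ y = true := by
      rw [hydef, hh₀.2.2.2.1, hh₀.2.2.2.1, Bool.and_eq_true, Bool.and_eq_true]
      refine ⟨⟨?_, ?_⟩, ?_⟩
      · rw [hh₀.finsetInf]
        intro i hi
        obtain ⟨hi1, hi2⟩ := Finset.mem_filter.1 hi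
        rw [hf₀ i]
        exact decide_eq_true ⟨hi1, hi2⟩
      · rw [hh₀.finsetInf]
        intro i hi
        obtain ⟨hi1, hi2⟩ := Finset.mem_filter.1 hi
        have hnv₁ : i ∉ v₁ := by
          intro hcon
          exact (Finset.mem_filter.1 hi1).2 (Finset.mem_filter.1 hcon).2
        rw [hh₀.2.2.1, hf₀ i]
        simp [hnv₁]
      · rw [hh₀.finsetInf]
        intro u' hu'
        obtain ⟨-, hAne⟩ := Finset.mem_filter.1 hu'
        obtain ⟨i, hi⟩ := hAne
        obtain ⟨hi1, hi2, hi3⟩ := Finset.mem_filter.1 hi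
        have hfalse : h₀ ((A u').inf x) = false := by
          cases hb : h₀ ((A u').inf x) with
          | false => rfl
          | true =>
            have := (hh₀.finsetInf _ _).1 hb i hi
            rw [hf₀ i] at this
            simp only [decide_eq_true_eq] at this
            exact absurd this.1 hi3
        rw [hh₀.2.2.1, hfalse]
        rfl
    rw [hyb, hh₀.1] at hy0
    exact Bool.false_ne_true hy0
  refine ⟨y, hymem, hyne, ?_⟩
  intro y' hy'mem hy'ne hy'le
  obtain ⟨h', hh', hh'y'⟩ := exists_boolHom_of_ne_bot hy'ne
  obtain ⟨s, hsu, hy's⟩ := subalgGen_image_finite_support x u y' hy'mem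
  obtain ⟨ht'ne, ht'y'⟩ := minterm_le x s y' hy's h' hh' hh'y'
  set s₁ : Finset ι := s.filter (fun i => h' (x i) = true) with hs₁def
  set s₀ : Finset ι := s.filter (fun i => ¬ h' (x i) = true) with hs₀def
  set t' : B := s₁.inf x ⊓ s₀.inf (fun i => (x i)ᶜ) with ht'def
  have ht'y : t' ≤ y := ht'y'.trans hy'le
  have hF1 : ∀ i ∈ v₁, i ∈ u → t' ≤ x i := fun i hi hiu =>
    ht'y.trans (le_trans inf_le_left (le_trans inf_le_left
      (Finset.inf_le (Finset.mem_filter.2 ⟨hi, hiu⟩))))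
  have hF2 : ∀ i ∈ v₀, i ∈ u → t' ≤ (x i)ᶜ := fun i hi hiu =>
    ht'y.trans (le_trans inf_le_left (le_trans inf_le_right
      (Finset.inf_le (Finset.mem_filter.2 ⟨hi, hiu⟩))))
  have hF3 : ∀ u' ∈ Vs, t' ≤ ((A u').inf x)ᶜ := fun u' hu' =>
    ht'y.trans (le_trans inf_le_right (Finset.inf_le hu'))
  have hFs₁ : ∀ i ∈ s₁, t' ≤ x i := fun i hi => le_trans inf_le_left (Finset.inf_le hi)
  have hFs₀ : ∀ i ∈ s₀, t' ≤ (x i)ᶜ := fun i hi => le_trans inf_le_right (Finset.inf_le hi)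
  have hbotof : ∀ b : B, t' ≤ b → t' ≤ bᶜ → False := fun b h1 h2 =>
    ht'ne (le_bot_iff.1 (by
      have := le_inf h1 h2
      rwa [inf_compl_eq_bot] at this))
  -- Core claim: no member of W is contained in s₁ ∪ v₁
  have hC : ∀ u'' ∈ W, ∃ i ∈ u'', ¬(i ∈ s₁ ∨ i ∈ v₁) := by
    intro u'' hu''W
    by_contra hcon
    push_neg at hcon
    by_cases husub : (↑u'' : Set ι) ⊆ u
    · apply ht'ne
      have hle : t' ≤ u''.inf x := Finset.le_inf (fun i hi => by
        rcases hcon i hi with h1 | h1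
        · exact hFs₁ i h1
        · exact hF1 i h1 (husub (Finset.mem_coe.2 hi)))
      rw [hWinf u'' hu''W] at hle
      exact le_bot_iff.1 hle
    · have hnotin : ((↑u'' : Set ι) ∩ u) ∉ w u'' := fun hmem => husub (hu u'' hu''W hmem)
      obtain ⟨hwsub, hwtop, hwup, hwpart⟩ := hc.1 u'' hu''W
      rcases hwpart ((↑u'' : Set ι) ∩ u) Set.inter_subset_left with hmem | hmem
      · exact hnotin hmem
      have hDeq : ((↑u'' : Set ι) \ ((↑u'' : Set ι) ∩ u)) = (↑u'' : Set ι) \ u := by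
        ext i; simp [Set.mem_diff]
      rw [hDeq] at hmem
      have hDv₁ : ((↑u'' : Set ι) \ u) ⊆ (↑v₁ : Set ι) := by
        rintro i ⟨hiu'', hiu⟩
        rcases hcon i (Finset.mem_coe.1 hiu'') with h1 | h1
        · exact absurd (hsu (Finset.mem_coe.2 (Finset.mem_filter.1 h1).1)) hiu
        · exact Finset.mem_coe.2 h1
      have hupmem : ((↑u'' : Set ι) ∩ (↑v₁ : Set ι)) ∈ w u'' :=
        hwup _ _ hmem (fun i hi => ⟨hi.1, hDv₁ hi⟩) Set.inter_subset_left
      have hVsfin : u'' ∈ (hc.2 v₁).toFinset := (Set.Finite.mem_toFinset _).2 ⟨hu''W, hupmem⟩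
      have hAne : (A u'').Nonempty := by
        by_contra hAe
        rw [Finset.not_nonempty_iff_eq_empty] at hAe
        apply hK u'' hu''W
        intro i hi
        by_cases hiu : i ∈ u
        · have hni := Finset.eq_empty_iff_forall_notMem.1 hAe i
          rw [hAdef] at hni
          simp only [Finset.mem_filter, not_and, not_not] at hni
          exact Finset.mem_coe.2 (hni (Finset.mem_coe.1 hi) hiu)
        · exact hDv₁ ⟨hi, hiu⟩
      have hVsmem : u'' ∈ Vs := Finset.mem_filter.2 ⟨hVsfin, hAne⟩
      have hle1 : t' ≤ (A u'').inf x := Finset.le_inf (fun i hi => by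
        obtain ⟨hi1, hi2, hi3⟩ := Finset.mem_filter.1 hi
        rcases hcon i hi1 with h1 | h1
        · exact hFs₁ i h1
        · exact absurd h1 hi3)
      exact hbotof _ hle1 (hF3 u'' hVsmem)
  obtain ⟨h₁, hh₁, hf₁⟩ := hext (fun i => decide (i ∈ s₁ ∨ i ∈ v₁)) (by
    intro u'' hu''W
    obtain ⟨i, hi, hip⟩ := hC u'' hu''W
    exact ⟨i, hi, decide_eq_false hip⟩)
  intro hbot
  have hlez : t' ⊓ t ≤ y' ⊓ z := inf_le_inf ht'y' htz
  rw [hbot] at hlez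
  have hzero : t' ⊓ t = ⊥ := le_bot_iff.1 hlez
  have hone : h₁ (t' ⊓ t) = true := by
    rw [hh₁.2.2.2.1, ht'def, htdef, hh₁.2.2.2.1, hh₁.2.2.2.1,
      Bool.and_eq_true, Bool.and_eq_true, Bool.and_eq_true]
    refine ⟨⟨?_, ?_⟩, ?_, ?_⟩
    · rw [hh₁.finsetInf]
      intro i hi
      rw [hf₁ i]
      exact decide_eq_true (Or.inl hi)
    · rw [hh₁.finsetInf]
      intro i hi
      have hns₁ : i ∉ s₁ := fun hcon =>
        (Finset.mem_filter.1 hi).2 (Finset.mem_filter.1 hcon).2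
      have hnv₁ : i ∉ v₁ := by
        intro hcon
        have hiu : i ∈ u := hsu (Finset.mem_coe.2 (Finset.mem_filter.1 hi).1)
        exact hbotof _ (hF1 i hcon hiu) (hFs₀ i hi)
      rw [hh₁.2.2.1, hf₁ i]
      simp [hns₁, hnv₁]
    · rw [hh₁.finsetInf]
      intro i hi
      rw [hf₁ i]
      exact decide_eq_true (Or.inr hi)
    · rw [hh₁.finsetInf]
      intro i hi
      have hnv₁ : i ∉ v₁ := fun hcon =>
        (Finset.mem_filter.1 hi).2 (Finset.mem_filter.1 hcon).2
      have hns₁ : i ∉ s₁ := by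
        intro hcon
        have hiu : i ∈ u := hsu (Finset.mem_coe.2 (Finset.mem_filter.1 hcon).1)
        exact hbotof _ (hFs₁ i hcon) (hF2 i hi hiu)
      rw [hh₁.2.2.1, hf₁ i]
      simp [hns₁, hnv₁]
  rw [hzero, hh₁.1] at hone
  exact Bool.false_ne_true hone
end

section
/- Let (W, w) be a nontrivial λ-candidate, let u ⊆ λ be (W, w)-closed, let B with elements x_i (i < λ) realize BA(W, w), and let B' be the Boolean subalgebra of B generated by {x_i : i ∈ u}. Then for every i ∈ λ \ u and every nonzero y ∈ B', both y ⊓ x_i ≠ 0 and y \ x_i ≠ 0. -/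
open Cardinal Set

section Aux

variable {ι B : Type*} [BooleanAlgebra B]

/-- A DNF term: meet of positive literals over `p.1` and negative literals over `p.2`. -/
def BTerm (x : ι → B) (p : Finset ι × Finset ι) : B :=
  p.1.inf x ⊓ p.2.inf (fun j => (x j)ᶜ)

/-- Finite sup of a list. -/
def FSup : List B → B := fun l => l.foldr (· ⊔ ·) ⊥

theorem FSup_nil : FSup ([] : List B) = ⊥ := rfl

theorem FSup_cons (a : B) (l : List B) : FSup (a :: l) = a ⊔ FSup l := rfl

theorem FSup_append (l₁ l₂ : List B) : FSup (l₁ ++ l₂) = FSup l₁ ⊔ FSup l₂ := by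
  induction l₁ with
  | nil => simp [FSup_nil, FSup_cons]
  | cons a l ih => simp [FSup_cons, ih, sup_assoc]

theorem le_FSup {a : B} {l : List B} (h : a ∈ l) : a ≤ FSup l := by
  induction l with
  | nil => simp at h
  | cons b l ih =>
      rcases List.mem_cons.mp h with h | h
      · simp [FSup_cons, h, le_sup_left]
      · exact le_trans (ih h) (by simp [FSup_cons])

theorem FSup_ne_bot {l : List B} (h : FSup l ≠ ⊥) : ∃ a ∈ l, a ≠ ⊥ := by
  induction l with
  | nil => exact absurd FSup_nil h
  | cons a l ih =>
      by_cases ha : a = ⊥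
      · rcases ih (by simpa [FSup_cons, ha] using h) with ⟨b, hb, hb'⟩
        exact ⟨b, List.mem_cons_of_mem _ hb, hb'⟩
      · exact ⟨a, List.mem_cons_self, ha⟩

/-- The set of finite sups of DNF terms with literals indexed in `u`. -/
def GoodSet (u : Set ι) (x : ι → B) : Set B :=
  {y | ∃ T : List (Finset ι × Finset ι),
    (∀ p ∈ T, (↑p.1 : Set ι) ⊆ u ∧ (↑p.2 : Set ι) ⊆ u) ∧ y = FSup (T.map (BTerm x))}

variable {u : Set ι} {x : ι → B}

theorem good_bot : (⊥ : B) ∈ GoodSet u x := ⟨[], by simp, rfl⟩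

theorem good_term {p : Finset ι × Finset ι} (h1 : (↑p.1 : Set ι) ⊆ u)
    (h2 : (↑p.2 : Set ι) ⊆ u) : BTerm x p ∈ GoodSet u x :=
  ⟨[p], by simp [h1, h2], by simp [FSup_cons, FSup_nil]⟩

theorem good_top : (⊤ : B) ∈ GoodSet u x := by
  have := good_term (x := x) (p := ((∅ : Finset ι), (∅ : Finset ι)))
    (by simp) (by simp [Set.empty_subset] : (↑(∅ : Finset ι) : Set ι) ⊆ u)
  simpa [BTerm] using this

theorem good_mem {j : ι} (hj : j ∈ u) : x j ∈ GoodSet u x := by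
  have := good_term (x := x) (p := (({j} : Finset ι), (∅ : Finset ι)))
    (by simpa using hj) (by simp)
  simpa [BTerm] using this

theorem good_sup {a b : B} (ha : a ∈ GoodSet u x) (hb : b ∈ GoodSet u x) :
    a ⊔ b ∈ GoodSet u x := by
  obtain ⟨T₁, hT₁, rfl⟩ := ha
  obtain ⟨T₂, hT₂, rfl⟩ := hb
  exact ⟨T₁ ++ T₂, fun p hp => ((List.mem_append.mp hp).elim (hT₁ p) (hT₂ p)),
    by rw [List.map_append, FSup_append]⟩

theorem good_term_inf {p : Finset ι × Finset ι} (h1 : (↑p.1 : Set ι) ⊆ u)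
    (h2 : (↑p.2 : Set ι) ⊆ u) {b : B} (hb : b ∈ GoodSet u x) :
    BTerm x p ⊓ b ∈ GoodSet u x := by
  classical
  obtain ⟨T, hT, rfl⟩ := hb
  induction T with
  | nil => simpa [FSup_nil] using good_bot
  | cons q T ih =>
      have hq := hT q (List.mem_cons_self)
      have hT' : ∀ r ∈ T, (↑r.1 : Set ι) ⊆ u ∧ (↑r.2 : Set ι) ⊆ u :=
        fun r hr => hT r (List.mem_cons_of_mem _ hr)
      have key : BTerm x p ⊓ BTerm x q = BTerm x (p.1 ∪ q.1, p.2 ∪ q.2) := by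
        simp only [BTerm, Finset.inf_union]
        ac_rfl
      have h1' : ((↑(p.1 ∪ q.1) : Set ι)) ⊆ u := by
        intro j hj
        rcases Finset.mem_union.mp (by exact_mod_cast hj) with h | h
        · exact h1 h
        · exact hq.1 h
      have h2' : ((↑(p.2 ∪ q.2) : Set ι)) ⊆ u := by
        intro j hj
        rcases Finset.mem_union.mp (by exact_mod_cast hj) with h | h
        · exact h2 h
        · exact hq.2 h
      have : BTerm x p ⊓ FSup ((q :: T).map (BTerm x))
          = BTerm x (p.1 ∪ q.1, p.2 ∪ q.2) ⊔ (BTerm x p ⊓ FSup (T.map (BTerm x))) := by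
        simp [List.map_cons, FSup_cons, inf_sup_left, key]
      rw [this]
      exact good_sup (good_term h1' h2') (ih hT')

theorem good_inf {a b : B} (ha : a ∈ GoodSet u x) (hb : b ∈ GoodSet u x) :
    a ⊓ b ∈ GoodSet u x := by
  obtain ⟨T, hT, rfl⟩ := ha
  induction T with
  | nil => simpa [FSup_nil] using good_bot
  | cons q T ih =>
      have hq := hT q (List.mem_cons_self)
      have : FSup ((q :: T).map (BTerm x)) ⊓ b
          = (BTerm x q ⊓ b) ⊔ (FSup (T.map (BTerm x)) ⊓ b) := by
        simp [List.map_cons, FSup_cons, inf_sup_right]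
      rw [this]
      exact good_sup (good_term_inf hq.1 hq.2 hb)
        (ih fun r hr => hT r (List.mem_cons_of_mem _ hr))

theorem good_inf_compl {s : Finset ι} {g : ι → B} (hs : (↑s : Set ι) ⊆ u)
    (hg : ∀ j ∈ s, (g j)ᶜ ∈ GoodSet u x) : (s.inf g)ᶜ ∈ GoodSet u x := by
  classical
  induction s using Finset.induction_on with
  | empty => simpa using good_bot
  | @insert a s hj ih =>
      rw [Finset.inf_insert, compl_inf]
      refine good_sup (hg a (Finset.mem_insert_self a s)) (ih ?_ ?_)
      · exact fun j hjs => hs (by simp [hjs])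
      · exact fun j hjs => hg j (Finset.mem_insert_of_mem hjs)

theorem good_compl {a : B} (ha : a ∈ GoodSet u x) : aᶜ ∈ GoodSet u x := by
  obtain ⟨T, hT, rfl⟩ := ha
  induction T with
  | nil => simpa [FSup_nil] using good_top
  | cons q T ih =>
      have hq := hT q (List.mem_cons_self)
      have hrest := ih fun r hr => hT r (List.mem_cons_of_mem _ hr)
      have : (FSup ((q :: T).map (BTerm x)))ᶜ
          = (BTerm x q)ᶜ ⊓ (FSup (T.map (BTerm x)))ᶜ := by
        simp [List.map_cons, FSup_cons]
      rw [this]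
      refine good_inf ?_ hrest
      have h1 : (q.1.inf x)ᶜ ∈ GoodSet u x := by
        refine good_inf_compl hq.1 fun j hj => ?_
        have := good_term (x := x) (p := ((∅ : Finset ι), ({j} : Finset ι)))
          (by simp) (by simpa using hq.1 hj)
        simpa [BTerm] using this
      have h2 : (q.2.inf (fun j => (x j)ᶜ))ᶜ ∈ GoodSet u x := by
        refine good_inf_compl hq.2 fun j hj => ?_
        rw [compl_compl]
        exact good_mem (hq.2 hj)
      rw [BTerm, compl_inf]
      exact good_sup h1 h2

theorem subalgGen_subset_good : SubalgGen (x '' u) ⊆ GoodSet u x := by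
  intro y hy
  refine hy (GoodSet u x) ⟨?_, good_bot, good_top, fun a ha => good_compl ha,
    fun a ha b hb => good_inf ha hb, fun a ha b hb => good_sup ha hb⟩
  rintro _ ⟨j, hj, rfl⟩
  exact good_mem hj

theorem hom_inf_true {h : B → Bool} (hh : IsBoolHom h) {s : Finset ι} {g : ι → B}
    (hg : ∀ j ∈ s, h (g j) = true) : h (s.inf g) = true := by
  classical
  induction s using Finset.induction_on with
  | empty => simpa using hh.2.1
  | @insert a s hj ih =>
      rw [Finset.inf_insert, hh.2.2.2.1]
      rw [hg a (Finset.mem_insert_self a s),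
        ih fun j hjs => hg j (Finset.mem_insert_of_mem hjs)]
      rfl

end Aux

/-- If `(W, w)` is a nontrivial candidate, `u` is `(W, w)`-closed and `B` realizes
`BA(W, w)`, then for every `i ∈ λ \ u` and every nonzero `y` in the subalgebra
generated by `{x i : i ∈ u}`, both `y ⊓ x i ≠ ⊥` and `y \ x i ≠ ⊥`. -/
theorem stmt_12 (ι B : Type) [BooleanAlgebra B]
    (W : Set (Finset ι)) (w : Finset ι → Set (Set ι)) (hc : IsCandidate W w)
    (hnt : NontrivialCand W w) (u : Set ι) (hu : WWClosed W w u)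
    (x : ι → B) (hr : RealizesBA W x) :
    ∀ i, i ∉ u → ∀ y ∈ SubalgGen (x '' u), y ≠ ⊥ →
      y ⊓ x i ≠ ⊥ ∧ y \ x i ≠ ⊥ := by
  classical
  intro i hi y hy hne
  obtain ⟨T, hT, rfl⟩ := subalgGen_subset_good hy
  obtain ⟨a, haT, hane⟩ := FSup_ne_bot hne
  obtain ⟨p, hpT, rfl⟩ := List.mem_map.mp haT
  obtain ⟨hs, ht⟩ := hT p hpT
  -- the positive part `s := p.1` and negative part `t := p.2` of the nonzero term
  have hst : ∀ j ∈ p.2, j ∉ p.1 := by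
    intro j hjt hjs
    apply hane
    have h1 : BTerm x p ≤ x j := le_trans inf_le_left (Finset.inf_le hjs)
    have h2 : BTerm x p ≤ (x j)ᶜ := le_trans inf_le_right (Finset.inf_le hjt)
    exact le_bot_iff.mp (by simpa using le_inf h1 h2)
  -- for each boolean `c`, build a hom sending `y` to `true` and `x i` to `c`
  have key : ∀ c : Bool, ∃ h : B → Bool,
      IsBoolHom h ∧ h (FSup (T.map (BTerm x))) = true ∧ h (x i) = c := by
    intro c
    set f : ι → Bool := fun j => if j ∈ p.1 then true else if j = i then c else false with hf
    have hadm : ∀ v ∈ W, ∃ j ∈ v, f j = false := by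
      intro v hv
      by_contra hcon
      push_neg at hcon
      have hall : ∀ j ∈ v, f j = true := by
        intro j hj
        cases hfj : f j with
        | false => exact absurd hfj (hcon j hj)
        | true => rfl
      by_cases hvs : ∀ j ∈ v, j ∈ p.1
      · -- then the term is below the zero relation for v
        apply hane
        have hle : p.1.inf x ≤ v.inf x := Finset.inf_mono hvs
        have : BTerm x p ≤ v.inf x := le_trans inf_le_left hle
        rw [hr.2.1 v hv] at this
        exact le_bot_iff.mp this
      · push_neg at hvs
        obtain ⟨j, hjv, hjs⟩ := hvs
        have hji : j = i := by
          have := hall j hjv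
          simp only [hf, if_neg hjs] at this
          by_contra hne'
          rw [if_neg hne'] at this
          exact Bool.false_ne_true this
        subst hji
        -- so j = i ∈ v; show v ∩ u ∈ w v and derive v ⊆ u, contradicting i ∉ u
        have hsub : (↑v \ {j} : Set ι) ⊆ (↑v ∩ u : Set ι) := by
          rintro k ⟨hkv, hki⟩
          refine ⟨hkv, ?_⟩
          have hkv' : k ∈ v := by exact_mod_cast hkv
          have := hall k hkv'
          simp only [hf] at this
          by_cases hks : k ∈ p.1
          · exact hs hks
          · rw [if_neg hks, if_neg (by simpa using hki)] at this
            · exact absurd (hall k hkv') (by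
                simp only [hf, if_neg hks, if_neg (by simpa using hki)]
                intro hcc
                exact hi (by rw [← hcc] at this; exact absurd this (by simp_all)))
        have hmem : (↑v ∩ u : Set ι) ∈ w v := by
          have hpf := (hc.1 v hv).2.2.1
          exact hpf _ _ (hnt v hv j hjv) hsub (Set.inter_subset_left)
        exact hi (hu v hv hmem hjv)
    obtain ⟨h, hhom, hx⟩ := hr.2.2 f hadm
    refine ⟨h, hhom, ?_, ?_⟩
    · -- h sends the chosen term to true, hence y to true
      have hterm : h (BTerm x p) = true := by
        rw [BTerm, hhom.2.2.2.1]
        have h1 : h (p.1.inf x) = true := by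
          refine hom_inf_true hhom fun j hj => ?_
          rw [hx j, hf]; simp [hj]
        have h2 : h (p.2.inf fun j => (x j)ᶜ) = true := by
          refine hom_inf_true hhom fun j hj => ?_
          simp [hhom.2.2.1, hx j, hf,
            show j ≠ i by rintro rfl; exact hi (ht hj)]
          exact hst j hj
        rw [h1, h2]; rfl
      have hle : BTerm x p ≤ FSup (T.map (BTerm x)) :=
        le_FSup (List.mem_map.mpr ⟨p, hpT, rfl⟩)
      have : FSup (T.map (BTerm x)) = BTerm x p ⊔ FSup (T.map (BTerm x)) :=
        (sup_eq_right.mpr hle).symm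
      rw [this, hhom.2.2.2.2, hterm]; rfl
    · simp [hx i, hf, show i ∉ p.1 from fun hcc => hi (hs hcc)]
  constructor
  · obtain ⟨h, hhom, hy1, hxi⟩ := key true
    intro hbot
    have : h (FSup (T.map (BTerm x)) ⊓ x i) = false := by rw [hbot]; exact hhom.1
    rw [hhom.2.2.2.1, hy1, hxi] at this
    simp at this
  · obtain ⟨h, hhom, hy1, hxi⟩ := key false
    intro hbot
    have : h (FSup (T.map (BTerm x)) \ x i) = false := by rw [hbot]; exact hhom.1
    rw [_root_.sdiff_eq, hhom.2.2.2.1, hy1, hhom.2.2.1, hxi] at this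
    simp at this
end

section
/- Let A and C be disjoint subsets of λ, let D be the collection of finite subsets of A with at least two elements, and let F : D → C be injective. Define W = { u ∪ {F(u)} : u ∈ D } and, for u ∈ D, w(u ∪ {F(u)}) = { v ⊆ u ∪ {F(u)} : u ⊆ v, or (F(u) ∈ v and v ∩ u ≠ ∅) }. Then (W, w) is a λ-candidate, and moreover it is nontrivial. -/
open Cardinal Set

/-- Let `A, C ⊆ λ` be disjoint, `D` the finite subsets of `A` with at least two
elements, `F : D → C` injective. With `W = {u ∪ {F u} : u ∈ D}` and
`w (u ∪ {F u}) = {v ⊆ u ∪ {F u} | u ⊆ v ∨ (F u ∈ v ∧ v ∩ u ≠ ∅)}`, the pair `(W, w)`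
is a `λ`-candidate, and moreover it is nontrivial. -/
theorem stmt_13 (ι : Type) [DecidableEq ι] (A C : Set ι) (hAC : Disjoint A C)
    (F : Finset ι → ι)
    (hFC : ∀ u : Finset ι, ↑u ⊆ A → 2 ≤ u.card → F u ∈ C)
    (hFinj : ∀ u v : Finset ι, ↑u ⊆ A → 2 ≤ u.card → ↑v ⊆ A → 2 ≤ v.card →
      F u = F v → u = v)
    (W : Set (Finset ι))
    (hW : W = {s | ∃ u : Finset ι, ↑u ⊆ A ∧ 2 ≤ u.card ∧ s = insert (F u) u})
    (w : Finset ι → Set (Set ι))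
    (hw : ∀ u : Finset ι, ↑u ⊆ A → 2 ≤ u.card →
      w (insert (F u) u) =
        {v : Set ι | v ⊆ insert (F u) (↑u : Set ι) ∧
          ((↑u : Set ι) ⊆ v ∨ (F u ∈ v ∧ v ∩ ↑u ≠ ∅))}) :
    IsCandidate W w ∧ NontrivialCand W w := by

  have hFnot : ∀ u : Finset ι, ↑u ⊆ A → 2 ≤ u.card → F u ∉ u := by
    intro u hu hc hmem
    exact Set.disjoint_left.1 hAC (hu hmem) (hFC u hu hc)
  subst hW
  refine ⟨⟨?_, ?_⟩, ?_⟩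
  · -- pseudo-filters
    rintro s ⟨u, hu, hc, rfl⟩
    rw [hw u hu hc]
    have hcoe : (↑(insert (F u) u) : Set ι) = insert (F u) (↑u : Set ι) := by
      simp
    refine ⟨fun v hv => by rw [hcoe]; exact hv.1, ?_, ?_, ?_⟩
    · rw [hcoe]
      exact ⟨subset_rfl, Or.inl (Set.subset_insert _ _)⟩
    · rintro v₁ v₂ ⟨hsub, h⟩ h12 h2
      rw [hcoe] at h2
      refine ⟨h2, ?_⟩
      rcases h with h | ⟨h1, h2'⟩
      · exact Or.inl (h.trans h12)
      · refine Or.inr ⟨h12 h1, ?_⟩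
        intro hemp
        apply h2'
        rw [Set.eq_empty_iff_forall_notMem] at hemp ⊢
        intro x hx
        exact hemp x ⟨h12 hx.1, hx.2⟩
    · intro v hv
      rw [hcoe] at hv ⊢
      by_cases hus : (↑u : Set ι) ⊆ v
      · exact Or.inl ⟨hv, Or.inl hus⟩
      · obtain ⟨i, hi, hiv⟩ : ∃ i ∈ (↑u : Set ι), i ∉ v := by
          simpa [Set.subset_def] using hus
        by_cases hFv : F u ∈ v
        · by_cases hvu : v ∩ (↑u : Set ι) = ∅
          · -- v = {F u}, complement contains u
            refine Or.inr ⟨Set.diff_subset, Or.inl ?_⟩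
            intro x hx
            refine ⟨Set.mem_insert_of_mem _ hx, ?_⟩
            intro hxv
            exact absurd (Set.eq_empty_iff_forall_notMem.1 hvu x) (by simp [hxv, hx])
          · exact Or.inl ⟨hv, Or.inr ⟨hFv, hvu⟩⟩
        · refine Or.inr ⟨Set.diff_subset, Or.inr ⟨⟨Set.mem_insert _ _, hFv⟩, ?_⟩⟩
          intro hemp
          exact absurd (Set.eq_empty_iff_forall_notMem.1 hemp i)
            (by simp [hi, hiv])
  · -- finiteness
    intro v
    have hT : ({u : Finset ι | u ⊆ v} ∪
        {u : Finset ι | ↑u ⊆ A ∧ 2 ≤ u.card ∧ F u ∈ v}).Finite := by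
      apply Set.Finite.union
      · exact Set.Finite.subset v.powerset.finite_toSet
          (fun u hu => Finset.mem_coe.2 (Finset.mem_powerset.2 hu))
      · apply Set.Finite.of_finite_image (f := F)
        · exact Set.Finite.subset v.finite_toSet (by rintro x ⟨u, ⟨_, _, hm⟩, rfl⟩; exact hm)
        · rintro a ⟨ha1, ha2, -⟩ b ⟨hb1, hb2, -⟩ hab
          exact hFinj a b ha1 ha2 hb1 hb2 hab
    apply Set.Finite.subset (hT.image (fun u => insert (F u) u))
    rintro s ⟨⟨u, hu, hc, rfl⟩, hmem⟩
    rw [hw u hu hc] at hmem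
    obtain ⟨-, hcase⟩ := hmem
    rcases hcase with h | ⟨hFv, -⟩
    · refine ⟨u, Or.inl ?_, rfl⟩
      intro i hi
      have := h (Finset.mem_coe.2 hi)
      exact Finset.mem_coe.1 this.2
    · exact ⟨u, Or.inr ⟨hu, hc, Finset.mem_coe.1 hFv.2⟩, rfl⟩
  · -- nontrivial
    rintro s ⟨u, hu, hc, rfl⟩ i hi
    rw [hw u hu hc]
    have hcoe : (↑(insert (F u) u) : Set ι) = insert (F u) (↑u : Set ι) := by simp
    rw [hcoe]
    refine ⟨Set.diff_subset, ?_⟩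
    rcases Finset.mem_insert.1 hi with rfl | hiu
    · refine Or.inl ?_
      intro x hx
      refine ⟨Set.mem_insert_of_mem _ hx, ?_⟩
      simp only [Set.mem_singleton_iff]
      rintro rfl
      exact hFnot u hu hc hx
    · have hne : F u ≠ i := by
        rintro rfl; exact hFnot u hu hc hiu
      refine Or.inr ⟨⟨Set.mem_insert _ _, by simpa using hne⟩, ?_⟩
      obtain ⟨j, hj, hji⟩ : ∃ j ∈ u, j ≠ i := by
        by_contra hcon
        push_neg at hcon
        have : u ⊆ {i} := fun x hx => Finset.mem_singleton.2 (hcon x hx)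
        have := Finset.card_le_card this
        simp at this
        omega
      intro hemp
      exact absurd (Set.eq_empty_iff_forall_notMem.1 hemp j)
        (by simp [hj, hji])
end
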